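/- arXiv:2305.11563 — 8 statements merged into one kernel-verified Lean document; each statement's English description precedes it below -/
import Mathlib

section
/- Let R be a ceer with infinitely many equivalence classes. Then R is hyperdark (every infinite transversal of R is hyperimmune) if and only if the principal transversal T_R of R is hyperimmune. -/
/-- A relation on ℕ is c.e. -/
def CeRel (R : ℕ → ℕ → Prop) : Prop := REPred fun p : ℕ × ℕ => R p.1 p.2

/-- A ceer: a c.e. equivalence relation on ℕ. -/
def Ceer (R : ℕ → ℕ → Prop) : Prop := Equivalence R ∧ CeRel R

/-- Computable reducibility of equivalence relations on ℕ. -/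
def Reduces (R S : ℕ → ℕ → Prop) : Prop :=
  ∃ f : ℕ → ℕ, Computable f ∧ ∀ x y, R x y ↔ S (f x) (f y)

/-- A transversal: a set of pairwise inequivalent numbers. -/
def IsTransversal (R : ℕ → ℕ → Prop) (T : Set ℕ) : Prop :=
  ∀ x ∈ T, ∀ y ∈ T, x ≠ y → ¬ R x y

/-- The principal transversal: least elements of equivalence classes. -/
def principalTransversal (R : ℕ → ℕ → Prop) : Set ℕ := {x | ∀ y < x, ¬ R y x}

/-- R has infinitely many equivalence classes. -/
def InfiniteClasses (R : ℕ → ℕ → Prop) : Prop :=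
  {s : Set ℕ | ∃ x, s = {y | R x y}}.Infinite

/-- A set is hyperimmune iff it is infinite and no computable function majorizes
its principal function (Kuznecov–Medvedev–Uspenskii characterization). -/
def Hyperimmune (A : Set ℕ) : Prop :=
  A.Infinite ∧ ¬ ∃ g : ℕ → ℕ, Computable g ∧ ∀ n, Nat.nth (· ∈ A) n ≤ g n

/-- A ceer is hyperdark if it has infinitely many classes and
all its infinite transversals are hyperimmune. -/
def Hyperdark (R : ℕ → ℕ → Prop) : Prop :=
  Ceer R ∧ InfiniteClasses R ∧
    ∀ T : Set ℕ, IsTransversal R T → T.Infinite → Hyperimmune T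

/-!
Sending each element of a transversal `T` to the least element of its class is injective,
does not increase numbers, and lands in the principal transversal. Hence below every bound
the principal transversal has at least as many elements as `T`, so its `n`-th element is at
most the `n`-th element of `T`: any computable majorant of the principal function of `T`
also majorizes that of the principal transversal.
-/

namespace Nat

theorem count_le_count_of_injOn {p q : ℕ → Prop} [DecidablePred p] [DecidablePred q]
    {f : ℕ → ℕ} (hf_le : ∀ x, f x ≤ x) (hf_maps : ∀ x, q x → p (f x))
    (hf_inj : Set.InjOn f (Set.ofPred q)) (n : ℕ) : count q n ≤ count p n := by
  rw [count_eq_card_filter_range, count_eq_card_filter_range]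
  refine Finset.card_le_card_of_injOn f (fun x hx => ?_) (hf_inj.mono fun x hx => ?_)
  · simp only [Finset.coe_filter, Finset.mem_range, Set.mem_ofPred_eq] at hx ⊢
    exact ⟨(hf_le x).trans_lt hx.1, hf_maps x hx.2⟩
  · simp only [Finset.coe_filter, Finset.mem_range, Set.mem_ofPred_eq] at hx
    exact hx.2

theorem nth_le_nth_of_count_le {p q : ℕ → Prop} [DecidablePred p] [DecidablePred q]
    (hp : (Set.ofPred p).Infinite) (hq : (Set.ofPred q).Infinite)
    (h : ∀ x, count q x ≤ count p x) (n : ℕ) : nth p n ≤ nth q n := by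
  have : n < count p (nth q n + 1) :=
    calc n < count q (nth q n + 1) := by rw [count_nth_succ_of_infinite hq]; exact lt_add_one n
      _ ≤ count p (nth q n + 1) := h _
  exact Nat.lt_succ_iff.mp ((lt_nth_iff_count_lt hp).1 this)

end Nat

section LeastRepresentative

variable {R : ℕ → ℕ → Prop}

noncomputable def minRep (R : ℕ → ℕ → Prop) (a : ℕ) : ℕ := sInf {y | R y a}

theorem minRep_rel (hR : Equivalence R) (a : ℕ) : R (minRep R a) a :=
  Nat.sInf_mem (s := {y | R y a}) ⟨a, hR.refl a⟩

theorem minRep_le (hR : Equivalence R) (a : ℕ) : minRep R a ≤ a :=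
  Nat.sInf_le (hR.refl a)

theorem minRep_mem_principalTransversal (hR : Equivalence R) (a : ℕ) :
    minRep R a ∈ principalTransversal R := fun _ hy hRy =>
  not_le.2 hy (Nat.sInf_le (hR.trans hRy (minRep_rel hR a)))

theorem isTransversal_principalTransversal (hR : Equivalence R) :
    IsTransversal R (principalTransversal R) := by
  intro x hx y hy hne hRxy
  rcases lt_or_gt_of_ne hne with hlt | hgt
  · exact hy x hlt hRxy
  · exact hx y hgt (hR.symm hRxy)

theorem IsTransversal.injOn_minRep (hR : Equivalence R) {T : Set ℕ} (hT : IsTransversal R T) :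
    Set.InjOn (minRep R) T := by
  intro a ha b hb hab
  by_contra hne
  have hRa := minRep_rel hR a
  rw [hab] at hRa
  exact hT a ha b hb hne (hR.trans (hR.symm hRa) (minRep_rel hR b))

theorem principalTransversal_infinite (hR : Equivalence R) (hinf : InfiniteClasses R) :
    (principalTransversal R).Infinite := by
  intro hfin
  refine hinf ((hfin.image fun x => {y | R x y}).subset ?_)
  rintro s ⟨x, rfl⟩
  have hclass : {y | R (minRep R x) y} = {y | R x y} := by
    ext y
    exact ⟨hR.trans (hR.symm (minRep_rel hR x)), hR.trans (minRep_rel hR x)⟩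
  exact ⟨minRep R x, minRep_mem_principalTransversal hR x, hclass⟩

theorem nth_principalTransversal_le (hR : Equivalence R) (hinf : InfiniteClasses R)
    {T : Set ℕ} (hT : IsTransversal R T) (hT_inf : T.Infinite) (n : ℕ) :
    Nat.nth (· ∈ principalTransversal R) n ≤ Nat.nth (· ∈ T) n := by
  classical
  exact Nat.nth_le_nth_of_count_le (q := (· ∈ T))
    (principalTransversal_infinite hR hinf) hT_inf
    (Nat.count_le_count_of_injOn (minRep_le hR)
      (fun x _ => minRep_mem_principalTransversal hR x) (hT.injOn_minRep hR)) n

end LeastRepresentative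

/-- a ceer with infinitely many classes is hyperdark iff its
principal transversal is hyperimmune. -/
theorem hyperdark_iff_principal_hyperimmune (R : ℕ → ℕ → Prop)
    (hR : Ceer R) (hinf : InfiniteClasses R) :
    (∀ T : Set ℕ, IsTransversal R T → T.Infinite → Hyperimmune T) ↔
      Hyperimmune (principalTransversal R) := by
  refine ⟨fun h => h _ (isTransversal_principalTransversal hR.1)
    (principalTransversal_infinite hR.1 hinf), ?_⟩
  rintro ⟨-, hP_not_majorized⟩ T hT hT_inf
  refine ⟨hT_inf, fun ⟨g, hg, hg_maj⟩ => hP_not_majorized ⟨g, hg, fun n => ?_⟩⟩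
  exact (nth_principalTransversal_le hR.1 hinf hT hT_inf n).trans (hg_maj n)
end

section
/- Hyperdarkness is downward closed under computable reducibility among infinite ceers: if R is a hyperdark ceer, E is a ceer with infinitely many equivalence classes, and E ≤_c R, then E is hyperdark. In particular, hyperdarkness is invariant under computable bi-reducibility of infinite ceers. -/
/-!
A reduction `f` sends an infinite transversal `T` of `E` injectively onto an infinite transversal
`f '' T` of `R`, which is hyperimmune. If a computable `g` majorized the principal function of `T`,
then the `n + 1` distinct values `f (nth T k)`, `k ≤ n`, would all lie below
`max {f m | m ≤ max {g k | k ≤ n}}`, a computable bound on the `n`-th element of `f '' T`.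
-/

def runningMax (f : ℕ → ℕ) (n : ℕ) : ℕ :=
  Nat.rec (motive := fun _ => ℕ) (f 0) (fun k ih => max ih (f (k + 1))) n

lemma Computable.runningMax {f : ℕ → ℕ} (hf : Computable f) : Computable (runningMax f) :=
  Computable.nat_rec Computable.id (Computable.const (f 0))
    (Primrec.nat_max.to_comp.comp (Computable.snd.comp Computable.snd)
      (hf.comp (Computable.succ.comp (Computable.fst.comp Computable.snd)))).to₂

lemma le_runningMax (f : ℕ → ℕ) {m n : ℕ} (h : m ≤ n) : f m ≤ runningMax f n := by
  induction n with
  | zero => simp_all [runningMax]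
  | succ k ih =>
    rcases Nat.le_succ_iff.mp h with hle | rfl
    · exact (ih hle).trans (le_max_left _ _)
    · exact le_max_right _ _

lemma Nat.nth_le_of_lt_card {p : ℕ → Prop} {s : Finset ℕ} {n b : ℕ}
    (hs : ∀ x ∈ s, p x ∧ x ≤ b) (hn : n < s.card) : Nat.nth p n ≤ b := by
  classical
  have hsub : s ⊆ (Finset.range (b + 1)).filter p := fun x hx =>
    Finset.mem_filter.mpr ⟨Finset.mem_range.mpr (Nat.lt_succ_of_le (hs x hx).2), (hs x hx).1⟩
  have hcount : n < Nat.count p (b + 1) := by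
    rw [Nat.count_eq_card_filter_range]
    exact hn.trans_le (Finset.card_le_card hsub)
  exact Nat.lt_succ_iff.mp (Nat.nth_lt_of_lt_count hcount)

lemma nth_image_le_runningMax {A : Set ℕ} (hA : A.Infinite) {f : ℕ → ℕ} (hf : Set.InjOn f A)
    {g : ℕ → ℕ} (hg : ∀ n, Nat.nth (· ∈ A) n ≤ g n) (n : ℕ) :
    Nat.nth (· ∈ f '' A) n ≤ runningMax (fun k => runningMax f (g k)) n := by
  classical
  have hmem : ∀ k, Nat.nth (· ∈ A) k ∈ A := Nat.nth_mem_of_infinite hA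
  let s := (Finset.range (n + 1)).image fun k => f (Nat.nth (· ∈ A) k)
  have hcard : s.card = n + 1 := by
    rw [Finset.card_image_of_injOn, Finset.card_range]
    exact fun a _ b _ hab => Nat.nth_injective hA (hf (hmem a) (hmem b) hab)
  refine Nat.nth_le_of_lt_card (s := s) ?_ (by omega)
  simp only [s, Finset.mem_image, Finset.mem_range]
  rintro _ ⟨k, hk, rfl⟩
  exact ⟨⟨_, hmem k, rfl⟩, (le_runningMax f (hg k)).trans
    (le_runningMax (fun k => runningMax f (g k)) (Nat.lt_succ_iff.mp hk))⟩

lemma Hyperimmune.of_image {A : Set ℕ} {f : ℕ → ℕ} (hf : Computable f) (hinj : Set.InjOn f A)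
    (hA : A.Infinite) (himage : Hyperimmune (f '' A)) : Hyperimmune A := by
  refine ⟨hA, fun ⟨g, hg, hmaj⟩ => himage.2 ?_⟩
  exact ⟨_, (hf.runningMax.comp hg).runningMax, nth_image_le_runningMax hA hinj hmaj⟩

section Reduction

variable {E R : ℕ → ℕ → Prop} {f : ℕ → ℕ} {T : Set ℕ}

lemma IsTransversal.injOn_of_reduction (hR : ∀ x, R x x) (hf : ∀ x y, E x y ↔ R (f x) (f y))
    (hT : IsTransversal E T) : Set.InjOn f T := by
  intro x hx y hy hxy
  by_contra hne
  exact hT x hx y hy hne ((hf x y).mpr (hxy ▸ hR (f x)))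

lemma IsTransversal.image_of_reduction (hf : ∀ x y, E x y ↔ R (f x) (f y))
    (hT : IsTransversal E T) : IsTransversal R (f '' T) := by
  rintro _ ⟨x, hx, rfl⟩ _ ⟨y, hy, rfl⟩ hne hRxy
  exact hT x hx y hy (fun h => hne (h ▸ rfl)) ((hf x y).mpr hRxy)

end Reduction

/-- hyperdarkness is downward closed under ≤_c among infinite
ceers. -/
theorem hyperdark_downward (R E : ℕ → ℕ → Prop)
    (hR : Hyperdark R) (hE : Ceer E) (hEinf : InfiniteClasses E)
    (hred : Reduces E R) : Hyperdark E := by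
  obtain ⟨f, hfc, hf⟩ := hred
  refine ⟨hE, hEinf, fun T hT hTinf => ?_⟩
  have hinj : Set.InjOn f T := hT.injOn_of_reduction hR.1.1.refl hf
  exact .of_image hfc hinj hTinf (hR.2.2 _ (hT.image_of_reduction hf) (hTinf.image hinj))
end

section
/- Let A be an infinite c.e. algebra of finite type (finitely many uniformly computable operations on ℕ modulo a ceer congruence =_A). If some finite nonempty subset X of the universe generates an infinite subalgebra, then =_A has an infinite transversal that is not hyperimmune; consequently =_A is not hyperdark. -/
/-- A c.e. algebra of finite type: universe ℕ, finitely many uniformly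
computable operations (given on lists, with prescribed arities), and a ceer
congruence `R` (the word problem). -/
structure CEAlg where
  k : ℕ
  arity : Fin k → ℕ
  op : Fin k → List ℕ → ℕ
  R : ℕ → ℕ → Prop
  op_computable : ∀ i, Computable (op i)
  ceer : Ceer R
  congr : ∀ i (l l' : List ℕ), l.length = arity i →
    List.Forall₂ R l l' → R (op i l) (op i l')

/-- One step of closing a set under the operations of the algebra. -/
def CEAlg.step (A : CEAlg) (S : Set ℕ) : Set ℕ :=
  S ∪ {y | ∃ i l, l.length = A.arity i ∧ (∀ x ∈ l, x ∈ S) ∧ y = A.op i l}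

/-- The stages X_n of the subalgebra generated by X. -/
def CEAlg.gen (A : CEAlg) (X : Set ℕ) : ℕ → Set ℕ
  | 0 => X
  | n + 1 => A.step (A.gen X n)

/-- The universe of the subalgebra generated by X. -/
def CEAlg.closure (A : CEAlg) (X : Set ℕ) : Set ℕ := ⋃ n, A.gen X n

/-!
The stages `X_n` are bounded by a computable function of `n`: the operations are computable,
and only finitely many argument lists have entries below a given bound. If some stage `X_{n+1}`
met no class outside those of `X_n`, then, `=_A` being a congruence, the classes of `X_n` would
be closed under the operations and so would be all classes of the subalgebra, of which there
are only finitely many. Hence every stage meets a new class; picking `y_n ∈ X_{n+1}` in a new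
class gives an infinite transversal whose `n`-th element is at most the bound of `X_{n+1}`.
-/

theorem Computable.list_map {α σ : Type*} [Primcodable α] [Primcodable σ] {f : α → σ}
    (hf : Computable f) : Computable (List.map f) := by
  -- the `n`-th stage of the recursion is `(l.take n).map f`
  have hrec : Computable fun l : List α =>
      Nat.rec (motive := fun _ => List σ) []
        (fun n acc => acc ++ (l[n]?.map f).toList) l.length :=
    Computable.nat_rec Computable.list_length (Computable.const [])
      ((Computable.list_append.comp (Computable.snd.comp Computable.snd)
        (Primrec.optionToList.to_comp.comp
          (Computable.option_map
            (Computable.list_getElem?.comp Computable.fst (Computable.fst.comp Computable.snd))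
            (hf.comp Computable.snd).to₂))).to₂)
  refine hrec.of_eq fun l => ?_
  have take_eq : ∀ n ≤ l.length, Nat.rec (motive := fun _ => List σ) []
      (fun n acc => acc ++ (l[n]?.map f).toList) n = (l.take n).map f := by
    intro n hn
    induction n with
    | zero => simp
    | succ n ih =>
      rw [List.take_add_one, List.map_append, ← ih (Nat.le_of_succ_le hn)]
      show _ ++ _ = _
      cases l[n]? <;> rfl
  rw [take_eq l.length le_rfl, List.take_length]

theorem Primrec.list_sections {α : Type*} [Primcodable α] : Primrec (@List.sections α) := by
  refine (Primrec.list_foldr (f := id) (g := fun _ => [[]])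
    (h := fun _ (p : List α × List (List α)) => p.2.flatMap fun s => p.1.map (· :: s))
    Primrec.id (Primrec.const _)
    (Primrec.list_flatMap (Primrec.snd.comp Primrec.snd)
      (Primrec.list_map (Primrec.fst.comp (Primrec.snd.comp Primrec.fst))
        (Primrec.list_cons.comp Primrec.snd (Primrec.snd.comp Primrec.fst)).to₂).to₂).to₂).of_eq
    fun L => ?_
  induction L with
  | nil => rfl
  | cons l L ih => simp only [id, List.foldr_cons, List.sections] at ih ⊢; rw [ih]

theorem Primrec.list_sum_nat : Primrec (List.sum : List ℕ → ℕ) :=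
  Primrec.list_foldr Primrec.id (Primrec.const 0)
    (Primrec.nat_add.comp (Primrec.fst.comp Primrec.snd) (Primrec.snd.comp Primrec.snd)).to₂

theorem List.mem_sections_replicate_range {l : List ℕ} {a m : ℕ} :
    l ∈ (List.replicate a (List.range (m + 1))).sections ↔ l.length = a ∧ ∀ x ∈ l, x ≤ m := by
  rw [List.mem_sections]
  induction l generalizing a with
  | nil => cases a <;> simp
  | cons x l ih =>
    cases a with
    | zero => simp
    | succ a => simp [List.replicate_succ, ih, and_left_comm]

theorem Nat.nth_range_le_of_injective {y : ℕ → ℕ} (hy : Function.Injective y) {n b : ℕ}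
    (hb : ∀ i ≤ n, y i ≤ b) : Nat.nth (· ∈ Set.range y) n ≤ b := by
  classical
  suffices n < Nat.count (· ∈ Set.range y) (b + 1) from
    Nat.lt_succ_iff.1 (Nat.nth_lt_of_lt_count this)
  have hsub : (Finset.range (n + 1)).image y ⊆
      (Finset.range (b + 1)).filter (· ∈ Set.range y) := by
    simp only [Finset.subset_iff, Finset.mem_image, Finset.mem_range, Finset.mem_filter]
    rintro _ ⟨i, hi, rfl⟩
    exact ⟨Nat.lt_succ_of_le (hb i (Nat.le_of_lt_succ hi)), i, rfl⟩
  have := Finset.card_le_card hsub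
  rwa [Finset.card_image_of_injective _ hy, Finset.card_range,
    ← Nat.count_eq_card_filter_range] at this

namespace CEAlg

variable (A : CEAlg)

def opBound (m : ℕ) : ℕ :=
  m + (List.ofFn fun i =>
    (((List.replicate (A.arity i) (List.range (m + 1))).sections).map (A.op i)).sum).sum

theorem le_opBound (m : ℕ) : m ≤ A.opBound m := Nat.le_add_right _ _

theorem op_le_opBound {i : Fin A.k} {l : List ℕ} {m : ℕ} (hlen : l.length = A.arity i)
    (hl : ∀ x ∈ l, x ≤ m) : A.op i l ≤ A.opBound m :=
  calc A.op i l
      ≤ (((List.replicate (A.arity i) (List.range (m + 1))).sections).map (A.op i)).sum :=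
        List.le_sum_of_mem (List.mem_map_of_mem (List.mem_sections_replicate_range.2 ⟨hlen, hl⟩))
    _ ≤ _ := List.le_sum_of_mem (List.mem_ofFn.2 ⟨i, rfl⟩)
    _ ≤ A.opBound m := Nat.le_add_left _ _

theorem opBound_computable : Computable A.opBound :=
  Primrec.nat_add.to_comp.comp Computable.id <| Primrec.list_sum_nat.to_comp.comp <|
    Computable.list_ofFn fun i => Primrec.list_sum_nat.to_comp.comp <|
      (Computable.list_map (A.op_computable i)).comp <| Primrec.list_sections.to_comp.comp <|
        ((Primrec.list_ofFn fun _ => Primrec.list_range.comp Primrec.succ).of_eq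
          fun _ => List.ofFn_const _ _).to_comp

def stageBound (N n : ℕ) : ℕ := A.opBound^[n] N

theorem stageBound_computable (N : ℕ) : Computable (A.stageBound N) :=
  (Computable.nat_rec Computable.id (Computable.const N)
    (A.opBound_computable.comp (Computable.snd.comp Computable.snd)).to₂).of_eq fun n => by
      induction n with
      | zero => rfl
      | succ n ih => exact (congrArg A.opBound ih).trans (Function.iterate_succ_apply' _ _ _).symm

theorem stageBound_mono (N : ℕ) : Monotone (A.stageBound N) :=
  monotone_nat_of_le_succ fun n => by
    simp only [stageBound, Function.iterate_succ_apply']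
    exact A.le_opBound _

theorem gen_subset_Iic_stageBound {X : Set ℕ} {N : ℕ} (hX : ∀ x ∈ X, x ≤ N) (n : ℕ) :
    A.gen X n ⊆ Set.Iic (A.stageBound N n) := by
  induction n with
  | zero => exact hX
  | succ n ih =>
    simp only [stageBound, Function.iterate_succ_apply']
    rintro x (hx | ⟨i, l, hlen, hl, rfl⟩)
    · exact (ih hx).trans (A.le_opBound _)
    · exact A.op_le_opBound hlen fun z hz => ih (hl z hz)

theorem gen_mono (X : Set ℕ) : Monotone (A.gen X) :=
  monotone_nat_of_le_succ fun _ => Set.subset_union_left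

def classOf (x : ℕ) : Set ℕ := {y | A.R x y}

theorem classOf_eq_classOf_iff {x y : ℕ} : A.classOf x = A.classOf y ↔ A.R x y := by
  obtain ⟨hR, -⟩ := A.ceer
  exact ⟨fun h => show y ∈ A.classOf x from h ▸ hR.refl y,
    fun h => Set.ext fun z => ⟨hR.trans (hR.symm h), hR.trans h⟩⟩

theorem classOf_image_step_subset {S T : Set ℕ} (h : A.classOf '' S ⊆ A.classOf '' T) :
    A.classOf '' A.step S ⊆ A.classOf '' A.step T := by
  rintro _ ⟨y, hy | ⟨i, l, hlen, hl, rfl⟩, rfl⟩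
  · obtain ⟨x, hx, hxy⟩ := h ⟨y, hy, rfl⟩
    exact ⟨x, Or.inl hx, hxy⟩
  · -- replace every entry of `l` by an equivalent element of `T`
    have hrep : ∀ x ∈ l, ∃ x' ∈ T, A.R x' x := fun x hx => by
      obtain ⟨x', hx', e⟩ := h ⟨x, hl x hx, rfl⟩
      exact ⟨x', hx', A.classOf_eq_classOf_iff.1 e⟩
    choose! rep hrepT hrepR using hrep
    have hl' : List.Forall₂ A.R (l.map rep) l := by
      rw [List.forall₂_map_left_iff, List.forall₂_same]
      exact hrepR
    refine ⟨A.op i (l.map rep), Or.inr ⟨i, l.map rep, by simpa using hlen, ?_, rfl⟩,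
      A.classOf_eq_classOf_iff.2 (A.congr i _ l (by simpa using hlen) hl')⟩
    simpa using hrepT

theorem classOf_image_closure_subset {X : Set ℕ} {n : ℕ}
    (h : A.classOf '' A.gen X (n + 1) ⊆ A.classOf '' A.gen X n) :
    A.classOf '' A.closure X ⊆ A.classOf '' A.gen X n := by
  have hstage : ∀ m, A.classOf '' A.gen X m ⊆ A.classOf '' A.gen X n := by
    intro m
    induction m with
    | zero => exact Set.image_mono (A.gen_mono X (Nat.zero_le n))
    | succ m ih => exact (A.classOf_image_step_subset ih).trans h
  rw [closure, Set.image_iUnion]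
  exact Set.iUnion_subset hstage

theorem exists_new_class {X : Set ℕ} (hX : X.Finite) (hinf : (A.classOf '' A.closure X).Infinite)
    (n : ℕ) : ∃ y ∈ A.gen X (n + 1), ∀ x ∈ A.gen X n, ¬ A.R x y := by
  by_contra! hold
  obtain ⟨N, hN⟩ := hX.bddAbove
  have hfin : (A.classOf '' A.gen X n).Finite :=
    ((Set.finite_Iic _).subset (A.gen_subset_Iic_stageBound hN n)).image _
  refine hinf (hfin.subset (A.classOf_image_closure_subset ?_))
  rintro _ ⟨y, hy, rfl⟩
  obtain ⟨x, hx, hxy⟩ := hold y hy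
  exact ⟨x, hx, A.classOf_eq_classOf_iff.2 hxy⟩

end CEAlg

theorem isTransversal_range {R : ℕ → ℕ → Prop} (hR : Equivalence R) {y : ℕ → ℕ}
    (hy : ∀ i j, i < j → ¬ R (y i) (y j)) : IsTransversal R (Set.range y) := by
  rintro _ ⟨i, rfl⟩ _ ⟨j, rfl⟩ hne hij
  rcases lt_trichotomy i j with h | rfl | h
  · exact hy i j h hij
  · exact hne rfl
  · exact hy j i h (hR.symm hij)

theorem not_hyperimmune_range {y g : ℕ → ℕ} (hy : Function.Injective y) (hg : Computable g)
    (hg_mono : Monotone g) (hyg : ∀ i, y i ≤ g i) : ¬ Hyperimmune (Set.range y) :=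
  fun ⟨_, hno⟩ => hno ⟨g, hg, fun _ =>
    Nat.nth_range_le_of_injective hy fun i hi => (hyg i).trans (hg_mono hi)⟩

theorem not_hyperdark_of_isTransversal {R : ℕ → ℕ → Prop} {T : Set ℕ} (hT : IsTransversal R T)
    (hinf : T.Infinite) (hT_hyp : ¬ Hyperimmune T) : ¬ Hyperdark R :=
  fun ⟨_, _, hall⟩ => hT_hyp (hall T hT hinf)

theorem alg_infinite_subalg_not_hyperdark_general (A : CEAlg)
    (X : Set ℕ) (hXfin : X.Finite)
    (hgen : {s : Set ℕ | ∃ x ∈ A.closure X, s = {y | A.R x y}}.Infinite) :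
    (∃ T : Set ℕ, IsTransversal A.R T ∧ T.Infinite ∧ ¬ Hyperimmune T) ∧
      ¬ Hyperdark A.R := by
  have hclasses : (A.classOf '' A.closure X).Infinite := by
    simp only [Set.image, eq_comm]
    exact hgen
  choose y hy_mem hy_new using A.exists_new_class hXfin hclasses
  have hy_rel : ∀ i j, i < j → ¬ A.R (y i) (y j) := fun i j hij =>
    hy_new j _ (A.gen_mono X hij (hy_mem i))
  have hy_inj : Function.Injective y := Function.Injective.of_lt_imp_ne fun i j hij he =>
    hy_rel i j hij (he ▸ A.ceer.1.refl _)
  obtain ⟨N, hN⟩ := hXfin.bddAbove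
  have hT : IsTransversal A.R (Set.range y) := isTransversal_range A.ceer.1 hy_rel
  have hT_inf : (Set.range y).Infinite := Set.infinite_range_of_injective hy_inj
  have hT_hyp : ¬ Hyperimmune (Set.range y) :=
    not_hyperimmune_range hy_inj ((A.stageBound_computable N).comp Computable.succ)
      ((A.stageBound_mono N).comp fun _ _ => Nat.succ_le_succ)
      fun i => A.gen_subset_Iic_stageBound hN (i + 1) (hy_mem i)
  exact ⟨⟨_, hT, hT_inf, hT_hyp⟩, not_hyperdark_of_isTransversal hT hT_inf hT_hyp⟩

/-- if some finite nonempty set generates an infinite subalgebra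
of an infinite c.e. algebra of finite type, then the word problem has an
infinite non-hyperimmune transversal; consequently it is not hyperdark. -/
theorem alg_infinite_subalg_not_hyperdark (A : CEAlg)
    (hAinf : InfiniteClasses A.R)
    (X : Set ℕ) (hXfin : X.Finite) (hXne : X.Nonempty)
    (hgen : {s : Set ℕ | ∃ x ∈ A.closure X, s = {y | A.R x y}}.Infinite) :
    (∃ T : Set ℕ, IsTransversal A.R T ∧ T.Infinite ∧ ¬ Hyperimmune T) ∧
      ¬ Hyperdark A.R :=
  alg_infinite_subalg_not_hyperdark_general A X hXfin hgen
end

section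
/- There exists a ceer R all of whose equivalence classes are finite such that ∅′ (the halting set) is Turing reducible to every infinite transversal of R. -/
open Nat in
/-- Relativized partial recursiveness: `RecursiveInOracle O f` means the partial
function `f` is partial computable with oracle `O`. -/
inductive RecursiveInOracle (O : ℕ →. ℕ) : (ℕ →. ℕ) → Prop
  | zero : RecursiveInOracle O (pure 0)
  | succ : RecursiveInOracle O Nat.succ
  | left : RecursiveInOracle O ↑fun n : ℕ => n.unpair.1
  | right : RecursiveInOracle O ↑fun n : ℕ => n.unpair.2
  | oracle : RecursiveInOracle O O
  | pair {f g} : RecursiveInOracle O f → RecursiveInOracle O g →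
      RecursiveInOracle O fun n => pair <$> f n <*> g n
  | comp {f g} : RecursiveInOracle O f → RecursiveInOracle O g →
      RecursiveInOracle O fun n => g n >>= f
  | prec {f g} : RecursiveInOracle O f → RecursiveInOracle O g → RecursiveInOracle O (unpaired fun a n =>
      n.rec (f a) fun y IH => do let i ← IH; g (pair a (pair y i)))
  | rfind {f} : RecursiveInOracle O f →
      RecursiveInOracle O fun a => rfind fun n => (fun m => m = 0) <$> f (pair a n)

/-- The characteristic function of a set, as a partial function. -/
noncomputable def chi (A : Set ℕ) : ℕ →. ℕ :=
  fun n => Part.some (@ite ℕ (n ∈ A) (Classical.propDecidable _) 1 0)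

/-- Turing reducibility between sets of naturals. -/
def TuringRed (A B : Set ℕ) : Prop := RecursiveInOracle (chi B) (chi A)

/-- The halting set ∅′, via Mathlib's partial recursive codes. -/
def HaltingSet : Set ℕ :=
  {e | ((Denumerable.ofNat Nat.Partrec.Code e).eval e).Dom}

/-!
Marker `n` sits at stage `s` at `n + t`, where `t ≤ s` is the last stage at which some program
`k < n`, run on input `k`, converged for the first time. Each marker moves only finitely often, and a marker that moves
at stage `s + 1` lands beyond `s`. Hence "`x` and `y` lie between the same markers at some stage
`s ≥ x, y`" is a c.e. equivalence relation whose classes are the finite intervals between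
consecutive limit positions of the markers. An infinite transversal `T` meets each interval at
most once, so its `n`-th element lies beyond the limit of marker `n`, hence beyond the halting
time of every halting `k < n`: `k ∈ ∅′` iff `k` halts within `nth T (k + 1)` steps, and
`nth T` is computable from `T`.
-/

theorem PrimrecRel.rePred_exists {α : Type*} [Primcodable α] {R : α → ℕ → Prop}
    (hR : PrimrecRel R) : REPred fun a => ∃ n, R a n := by
  classical
  refine (Partrec.rfind hR.decide.to_comp.partrec₂).dom_re.of_eq fun a => ?_
  simp [Nat.rfind_dom]

theorem Nat.findGreatest_eq_of_forall_not {P : ℕ → Prop} [DecidablePred P] {b s : ℕ}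
    (hbs : b ≤ s) (hP : ∀ t, b < t → ¬P t) : Nat.findGreatest P s = Nat.findGreatest P b := by
  induction s, hbs using Nat.le_induction with
  | base => rfl
  | succ s hbs ih => rw [Nat.findGreatest_of_not (hP _ (by omega)), ih]

theorem le_nth_of_isTransversal {R : ℕ → ℕ → Prop} {b : ℕ → ℕ} (hb : b 0 = 0)
    (hR : ∀ j, ∀ x ∈ Set.Ico (b j) (b (j + 1)), ∀ y ∈ Set.Ico (b j) (b (j + 1)), R x y)
    {T : Set ℕ} (hT : IsTransversal R T) (hinf : T.Infinite) (n : ℕ) :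
    b n ≤ Nat.nth (· ∈ T) n := by
  induction n with
  | zero => simp [hb]
  | succ n ih =>
    by_contra! hlt
    have hmono := Nat.nth_strictMono (p := (· ∈ T)) hinf (lt_add_one n)
    exact hT _ (Nat.nth_mem_of_infinite (p := (· ∈ T)) hinf n) _
      (Nat.nth_mem_of_infinite (p := (· ∈ T)) hinf (n + 1)) hmono.ne
      (hR n _ ⟨ih, by omega⟩ _ ⟨by omega, hlt⟩)

namespace RecursiveInOracle

variable {O : ℕ →. ℕ} {f g : ℕ → ℕ}

theorem of_eq {f g : ℕ →. ℕ} (hf : RecursiveInOracle O f) (H : ∀ n, f n = g n) :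
    RecursiveInOracle O g :=
  funext H ▸ hf

theorem of_eq_total (hf : RecursiveInOracle O f) (H : ∀ n, f n = g n) :
    RecursiveInOracle O g :=
  funext H ▸ hf

theorem of_partrec {f : ℕ →. ℕ} (hf : Nat.Partrec f) : RecursiveInOracle O f := by
  induction hf with
  | zero => exact .zero
  | succ => exact .succ
  | left => exact .left
  | right => exact .right
  | pair _ _ ihf ihg => exact .pair ihf ihg
  | comp _ _ ihf ihg => exact .comp ihf ihg
  | prec _ _ ihf ihg => exact .prec ihf ihg
  | rfind _ ihf => exact .rfind ihf

theorem of_primrec (hf : Primrec f) : RecursiveInOracle O f :=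
  of_partrec (Nat.Partrec.of_primrec (Primrec.nat_iff.mp hf))

theorem comp_total (hf : RecursiveInOracle O f) (hg : RecursiveInOracle O g) :
    RecursiveInOracle O (fun n => f (g n) : ℕ → ℕ) :=
  (RecursiveInOracle.comp hf hg).of_eq fun _ => Part.bind_some _ _

theorem comp₂_total {h : ℕ → ℕ → ℕ} (hh : Primrec₂ h) (hf : RecursiveInOracle O f)
    (hg : RecursiveInOracle O g) : RecursiveInOracle O (fun n => h (f n) (g n) : ℕ → ℕ) := by
  have hpair : RecursiveInOracle O (fun n => Nat.pair (f n) (g n) : ℕ → ℕ) :=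
    (RecursiveInOracle.pair hf hg).of_eq fun n => by simp [Seq.seq]
  exact (comp_total (of_primrec (Primrec₂.unpaired.mpr hh)) hpair).of_eq fun n => by
    simp [Nat.unpair_pair]

theorem find_total {p : ℕ → ℕ → Prop} [DecidableRel p]
    (hp : RecursiveInOracle O (fun q => if p q.unpair.1 q.unpair.2 then 0 else 1 : ℕ → ℕ))
    (h : ∀ a, ∃ n, p a n) : RecursiveInOracle O (fun a => Nat.find (h a) : ℕ → ℕ) :=
  (RecursiveInOracle.rfind hp).of_eq fun a => by
    refine Part.eq_some_iff.mpr (Nat.mem_rfind.mpr ⟨?_, fun hm => ?_⟩)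
    · simpa [Nat.unpair_pair] using Nat.find_spec (h a)
    · simpa [Nat.unpair_pair] using Nat.find_min (h a) hm

theorem iterate (hf : RecursiveInOracle O f) (c : ℕ) :
    RecursiveInOracle O (fun n => f^[n] c : ℕ → ℕ) := by
  have hstep : RecursiveInOracle O (fun q => f q.unpair.2.unpair.2 : ℕ → ℕ) :=
    comp_total hf (of_primrec ((Primrec.snd.comp Primrec.unpair).comp
      (Primrec.snd.comp Primrec.unpair)))
  have hrec := RecursiveInOracle.prec (of_primrec (Primrec.const c) : RecursiveInOracle O _) hstep
  refine (RecursiveInOracle.comp hrec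
    (of_primrec (Primrec₂.natPair.comp (Primrec.const 0) Primrec.id))).of_eq fun n => ?_
  simp only [PFun.coe_val, Part.bind_eq_bind, Part.bind_some, id, Nat.unpaired, Nat.unpair_pair]
  induction n with
  | zero => rfl
  | succ n ih => simp only [ih, Part.bind_some, Function.iterate_succ_apply']

end RecursiveInOracle

theorem Nat.nth_succ_eq_sInf {p : ℕ → Prop} (hp : (Set.ofPred p).Infinite) (n : ℕ) :
    Nat.nth p (n + 1) = sInf {i | p i ∧ Nat.nth p n + 1 ≤ i} := by
  classical
  rw [← Nat.count_nth_succ_of_infinite hp, Nat.nth_count_eq_sInf]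

section Oracle

variable {T : Set ℕ}

theorem chi_eq [DecidablePred (· ∈ T)] :
    chi T = ((fun n => if n ∈ T then 1 else 0 : ℕ → ℕ) : ℕ →. ℕ) := by
  funext n
  simp only [chi, PFun.coe_val]
  congr

theorem recursiveInOracle_sInf_mem_ge (hT : T.Infinite) :
    RecursiveInOracle (chi T) (fun a => sInf {i | i ∈ T ∧ a ≤ i} : ℕ → ℕ) := by
  classical
  have hχ : RecursiveInOracle (chi T) (fun n => if n ∈ T then 1 else 0 : ℕ → ℕ) :=
    chi_eq (T := T) ▸ .oracle
  have htest : Primrec₂ fun q c : ℕ => if c = 1 ∧ q.unpair.1 ≤ q.unpair.2 then 0 else 1 :=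
    Primrec.ite (PrimrecPred.and (Primrec.eq.comp Primrec.snd (Primrec.const 1))
        (Primrec.nat_le.comp (Primrec.fst.comp (Primrec.unpair.comp Primrec.fst))
          (Primrec.snd.comp (Primrec.unpair.comp Primrec.fst))))
      (Primrec.const 0) (Primrec.const 1)
  have hsearch : RecursiveInOracle (chi T)
      (fun q => if q.unpair.2 ∈ T ∧ q.unpair.1 ≤ q.unpair.2 then 0 else 1 : ℕ → ℕ) := by
    refine (RecursiveInOracle.comp₂_total htest (RecursiveInOracle.of_primrec Primrec.id)
      (RecursiveInOracle.comp_total hχ (RecursiveInOracle.of_primrec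
        (Primrec.snd.comp Primrec.unpair)))).of_eq_total fun q => ?_
    by_cases hq : q.unpair.2 ∈ T <;> simp [hq]
  have hex (a : ℕ) : ∃ i, i ∈ T ∧ a ≤ i := (hT.exists_gt a).imp fun _ hi => ⟨hi.1, hi.2.le⟩
  refine (RecursiveInOracle.find_total (p := fun a i => i ∈ T ∧ a ≤ i) hsearch hex).of_eq_total
    fun a => (Nat.find_eq_iff _).mpr ⟨Nat.sInf_mem (hex a), fun _ => Nat.notMem_of_lt_sInf⟩

theorem recursiveInOracle_nth (hT : T.Infinite) :
    RecursiveInOracle (chi T) (Nat.nth (· ∈ T) : ℕ → ℕ) := by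
  refine (RecursiveInOracle.iterate (RecursiveInOracle.comp_total
    (recursiveInOracle_sInf_mem_ge hT) (RecursiveInOracle.of_primrec Primrec.succ))
    (sInf {i | i ∈ T ∧ 0 ≤ i})).of_eq_total fun n => ?_
  induction n with
  | zero => simp [Nat.nth_zero]
  | succ n ih =>
    rw [Function.iterate_succ_apply', ih]
    exact (Nat.nth_succ_eq_sInf (p := (· ∈ T)) hT n).symm

end Oracle

namespace HaltingMarkers

open Nat.Partrec Code Filter

def HaltsBy (s k : ℕ) : Prop := ((Denumerable.ofNat Code k).evaln s k).isSome

instance : DecidableRel HaltsBy := fun _ _ => inferInstanceAs (Decidable (_ = true))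

theorem primrecRel_haltsBy : PrimrecRel HaltsBy :=
  Primrec.primrecPred <| (Primrec.option_isSome.comp <| primrec_evaln.comp <|
    (Primrec.fst.pair ((Primrec.ofNat Code).comp Primrec.snd)).pair Primrec.snd).of_eq
    fun _ => Bool.decide_eq_true.symm

theorem HaltsBy.mono {s t k : ℕ} (hst : s ≤ t) (h : HaltsBy s k) : HaltsBy t k := by
  obtain ⟨x, hx⟩ := Option.isSome_iff_exists.mp h
  exact Option.isSome_iff_exists.mpr ⟨x, evaln_mono hst hx⟩

theorem mem_haltingSet_iff {k : ℕ} : k ∈ HaltingSet ↔ ∃ s, HaltsBy s k := by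
  simp only [HaltingSet, Set.mem_ofPred_eq, Part.dom_iff_mem, evaln_complete, HaltsBy,
    Option.isSome_iff_exists]
  exact exists_comm

def HaltsAt (t k : ℕ) : Prop := HaltsBy t k ∧ ∀ s < t, ¬HaltsBy s k

instance : DecidableRel HaltsAt := fun _ _ => inferInstanceAs (Decidable (_ ∧ _))

theorem primrecRel_haltsAt : PrimrecRel HaltsAt :=
  primrecRel_haltsBy.and (PrimrecRel.forall_lt primrecRel_haltsBy.not)

theorem HaltsAt.le {t s k : ℕ} (ht : HaltsAt t k) (hs : HaltsBy s k) : t ≤ s :=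
  not_lt.mp fun hst => ht.2 s hst hs

theorem exists_haltsAt {k : ℕ} (hk : k ∈ HaltingSet) : ∃ t, HaltsAt t k := by
  classical
  have hex := mem_haltingSet_iff.mp hk
  exact ⟨Nat.find hex, Nat.find_spec hex, fun _ => Nat.find_min hex⟩

theorem subsingleton_setOf_haltsAt (k : ℕ) : {t | HaltsAt t k}.Subsingleton :=
  fun _ ht _ ht' => le_antisymm (HaltsAt.le ht ht'.1) (HaltsAt.le ht' ht.1)

def marker (n s : ℕ) : ℕ := n + Nat.findGreatest (fun t => ∃ k < n, HaltsAt t k) s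

theorem primrec₂_marker : Primrec₂ marker :=
  Primrec.nat_add.comp Primrec.fst <| Primrec.nat_findGreatest Primrec.snd <|
    (PrimrecRel.exists_lt (R := fun k t => HaltsAt t k) (primrecRel_haltsAt.comp₂
      Primrec₂.right Primrec₂.left)).comp₂ (Primrec.fst.comp₂ Primrec₂.left) Primrec₂.right

theorem le_marker (n s : ℕ) : n ≤ marker n s := Nat.le_add_right _ _

theorem marker_zero_left (s : ℕ) : marker 0 s = 0 := by
  simp [marker, Nat.findGreatest_eq_zero_iff]

theorem marker_lt_marker_succ (n s : ℕ) : marker n s < marker (n + 1) s := by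
  have := Nat.findGreatest_mono_left (P := fun t => ∃ k < n, HaltsAt t k)
    (Q := fun t => ∃ k < n + 1, HaltsAt t k) (fun _ ⟨k, hk, h⟩ => ⟨k, by omega, h⟩) s
  unfold marker
  omega

theorem marker_succ_right (n s : ℕ) : marker n (s + 1) = marker n s ∨ s < marker n (s + 1) := by
  unfold marker
  rw [Nat.findGreatest_succ]
  split_ifs <;> omega

theorem haltsBy_marker {n s t k : ℕ} (hk : k < n) (ht : HaltsAt t k) (hts : t ≤ s) :
    HaltsBy (marker n s) k :=
  ht.1.mono ((Nat.le_findGreatest hts ⟨k, hk, ht⟩).trans (Nat.le_add_left _ _))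

theorem exists_marker_stable (n : ℕ) : ∃ s₀, ∀ s ≥ s₀, marker n s = marker n s₀ := by
  have hfin : {t | ∃ k < n, HaltsAt t k}.Finite := by
    refine ((Set.finite_Iio n).biUnion fun k _ => (subsingleton_setOf_haltsAt k).finite).subset ?_
    rintro t ⟨k, hk, ht⟩
    exact Set.mem_biUnion hk ht
  obtain ⟨b, hb⟩ := hfin.bddAbove
  exact ⟨b, fun s hs => by
    rw [marker, marker, Nat.findGreatest_eq_of_forall_not (P := fun t => ∃ k < n, HaltsAt t k) hs
      fun t hbt ht => (hb ht).not_gt hbt]⟩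

noncomputable def limMarker (n : ℕ) : ℕ := marker n (exists_marker_stable n).choose

theorem eventually_marker_eq (n : ℕ) : ∀ᶠ s in atTop, marker n s = limMarker n :=
  eventually_atTop.mpr ⟨_, (exists_marker_stable n).choose_spec⟩

theorem limMarker_zero : limMarker 0 = 0 := by
  obtain ⟨s, hs⟩ := (eventually_marker_eq 0).exists
  rw [← hs, marker_zero_left]

theorem strictMono_limMarker : StrictMono limMarker := by
  refine strictMono_nat_of_lt_succ fun n => ?_
  obtain ⟨s, hs, hs'⟩ := ((eventually_marker_eq n).and (eventually_marker_eq (n + 1))).exists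
  exact hs ▸ hs' ▸ marker_lt_marker_succ n s

theorem haltsBy_limMarker {k n : ℕ} (hk : k < n) (hK : k ∈ HaltingSet) :
    HaltsBy (limMarker n) k := by
  obtain ⟨t, ht⟩ := exists_haltsAt hK
  obtain ⟨s, hs, hts⟩ := ((eventually_marker_eq n).and (eventually_ge_atTop t)).exists
  exact hs ▸ haltsBy_marker hk ht hts

def SameBlock (s x y : ℕ) : Prop := ∀ n, marker n s ≤ x ↔ marker n s ≤ y

theorem SameBlock.succ {s x y : ℕ} (hx : x ≤ s) (hy : y ≤ s) (h : SameBlock s x y) :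
    SameBlock (s + 1) x y := fun n => by
  rcases marker_succ_right n s with hn | hn
  · exact hn ▸ h n
  · exact iff_of_false (by omega) (by omega)

theorem SameBlock.mono {s t x y : ℕ} (hst : s ≤ t) (hx : x ≤ s) (hy : y ≤ s)
    (h : SameBlock s x y) : SameBlock t x y := by
  induction t, hst using Nat.le_induction with
  | base => exact h
  | succ t hst ih => exact ih.succ (hx.trans hst) (hy.trans hst)

theorem sameBlock_iff_forall_lt {s x y : ℕ} :
    SameBlock s x y ↔ ∀ n < x + y + 1, (marker n s ≤ x ↔ marker n s ≤ y) := by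
  refine ⟨fun h n _ => h n, fun h n => ?_⟩
  by_cases hn : n < x + y + 1
  · exact h n hn
  · have := le_marker n s
    exact iff_of_false (by omega) (by omega)

def BlockRel (x y : ℕ) : Prop := ∃ s, x ≤ s ∧ y ≤ s ∧ SameBlock s x y

theorem equivalence_blockRel : Equivalence BlockRel where
  refl x := ⟨x, le_rfl, le_rfl, fun _ => Iff.rfl⟩
  symm := fun ⟨s, hx, hy, h⟩ => ⟨s, hy, hx, fun n => (h n).symm⟩
  trans := fun ⟨s, hx, hy, h⟩ ⟨t, hy', hz, h'⟩ =>
    ⟨max s t, hx.trans (le_max_left s t), hz.trans (le_max_right s t), fun n =>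
      (h.mono (le_max_left s t) hx hy n).trans (h'.mono (le_max_right s t) hy' hz n)⟩

theorem ceRel_blockRel : CeRel BlockRel := by
  have hblock : PrimrecRel fun (p : ℕ × ℕ) (s : ℕ) =>
      p.1 ≤ s ∧ p.2 ≤ s ∧ ∀ n < p.1 + p.2 + 1, (marker n s ≤ p.1 ↔ marker n s ≤ p.2) := by
    have hmarker : Primrec fun q : ℕ × (ℕ × ℕ) × ℕ => marker q.1 q.2.2 :=
      primrec₂_marker.comp Primrec.fst (Primrec.snd.comp Primrec.snd)
    have hsep : PrimrecRel fun (n : ℕ) (q : (ℕ × ℕ) × ℕ) =>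
        (marker n q.2 ≤ q.1.1 ↔ marker n q.2 ≤ q.1.2) :=
      (Primrec.eq.comp
        (Primrec.nat_le.comp hmarker (Primrec.fst.comp (Primrec.fst.comp Primrec.snd))).decide
        (Primrec.nat_le.comp hmarker (Primrec.snd.comp (Primrec.fst.comp Primrec.snd))).decide
        ).of_eq fun _ => decide_eq_decide
    have hbound : Primrec fun q : (ℕ × ℕ) × ℕ => q.1.1 + q.1.2 + 1 :=
      Primrec.nat_add.comp (Primrec.nat_add.comp (Primrec.fst.comp Primrec.fst)
        (Primrec.snd.comp Primrec.fst)) (Primrec.const 1)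
    exact (Primrec.nat_le.comp (Primrec.fst.comp Primrec.fst) Primrec.snd).and
      ((Primrec.nat_le.comp (Primrec.snd.comp Primrec.fst) Primrec.snd).and
        ((hsep.forall_mem_list.comp (Primrec.list_range.comp hbound) Primrec.id).of_eq
          fun _ => by simp only [List.mem_range, id]))
  exact hblock.rePred_exists.of_eq fun p => by simp only [BlockRel, sameBlock_iff_forall_lt]

theorem blockRel_of_mem_Ico {j x y : ℕ} (hx : x ∈ Set.Ico (limMarker j) (limMarker (j + 1)))
    (hy : y ∈ Set.Ico (limMarker j) (limMarker (j + 1))) : BlockRel x y := by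
  obtain ⟨s, hs, hxs, hys⟩ := ((eventually_all_finset (Finset.range (x + y + 1))).mpr
    (fun n _ => eventually_marker_eq n) |>.and ((eventually_ge_atTop x).and
      (eventually_ge_atTop y))).exists
  refine ⟨s, hxs, hys, sameBlock_iff_forall_lt.mpr fun n hn => ?_⟩
  rw [hs n (Finset.mem_range.mpr hn)]
  obtain ⟨hjx, hxj⟩ := hx
  obtain ⟨hjy, hyj⟩ := hy
  rcases le_or_gt n j with hnj | hjn
  · have := strictMono_limMarker.monotone hnj
    exact iff_of_true (by omega) (by omega)
  · have := strictMono_limMarker.monotone (show j + 1 ≤ n from hjn)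
    exact iff_of_false (by omega) (by omega)

theorem lt_limMarker_of_blockRel {x y : ℕ} (h : BlockRel x y) : y < limMarker (x + 1) := by
  obtain ⟨s, hx, hy, hxy⟩ := h
  obtain ⟨t, ht, hst⟩ := ((eventually_marker_eq (x + 1)).and (eventually_ge_atTop s)).exists
  by_contra! hle
  have := (hxy.mono hst hx hy (x + 1)).mpr (ht.trans_le hle)
  have := le_marker (x + 1) t
  omega

theorem finite_setOf_blockRel (x : ℕ) : {y | BlockRel x y}.Finite :=
  (Set.finite_Iio _).subset fun _ => lt_limMarker_of_blockRel

end HaltingMarkers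

open HaltingMarkers

/-- there is a ceer with only finite classes such that ∅′ is
Turing reducible to every infinite transversal. -/
theorem exists_ceer_finite_classes_transversals_compute_halting :
    ∃ R : ℕ → ℕ → Prop, Ceer R ∧ (∀ x : ℕ, {y | R x y}.Finite) ∧
      ∀ T : Set ℕ, IsTransversal R T → T.Infinite → TuringRed HaltingSet T := by
  refine ⟨BlockRel, ⟨equivalence_blockRel, ceRel_blockRel⟩, finite_setOf_blockRel,
    fun T hT hinf => ?_⟩
  have hbound : ∀ n, limMarker n ≤ Nat.nth (· ∈ T) n :=
    le_nth_of_isTransversal limMarker_zero (fun _ _ hx _ hy => blockRel_of_mem_Ico hx hy) hT hinf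
  have hK : ∀ k, k ∈ HaltingSet ↔ HaltsBy (Nat.nth (· ∈ T) (k + 1)) k := fun k =>
    ⟨fun hk => (haltsBy_limMarker (lt_add_one k) hk).mono (hbound _),
      fun h => mem_haltingSet_iff.mpr ⟨_, h⟩⟩
  classical
  have hindicator : Primrec₂ fun k v => if HaltsBy v k then 1 else 0 :=
    Primrec.ite (primrecRel_haltsBy.comp Primrec.snd Primrec.fst) (Primrec.const 1) (Primrec.const 0)
  rw [TuringRed, chi_eq]
  exact (RecursiveInOracle.comp₂_total hindicator (RecursiveInOracle.of_primrec Primrec.id)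
    (RecursiveInOracle.comp_total (recursiveInOracle_nth hinf)
      (RecursiveInOracle.of_primrec Primrec.succ))).of_eq_total fun k => by simp [hK]
end

section
/- If a function g : ℕ → ℕ dominates every partial computable function (for each e there is i_e such that for all i ≥ i_e, if φ_e(i) is defined then φ_e(i) < g(i)), then ∅′ ≤_T g. -/
/-! The stage at which `φ_e(e)` first converges is a partial computable function of `e`, so `g`
eventually exceeds it: for all large `e`, `e ∈ ∅′` iff `φ_e(e)` converges within `g e` steps, which
is decidable from `g e`. The finitely many remaining `e` are read off a finite table. -/

open Nat.Partrec (Code)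

theorem RecursiveInOracle.of_partrec_s11 {O f : ℕ →. ℕ} (hf : Nat.Partrec f) :
    RecursiveInOracle O f := by
  induction hf with
  | zero => exact .zero
  | succ => exact .succ
  | left => exact .left
  | right => exact .right
  | pair _ _ ih₁ ih₂ => exact .pair ih₁ ih₂
  | comp _ _ ih₁ ih₂ => exact .comp ih₁ ih₂
  | prec _ _ ih₁ ih₂ => exact .prec ih₁ ih₂
  | rfind _ ih => exact .rfind ih

theorem RecursiveInOracle.of_computable₂ {g : ℕ → ℕ} {F : ℕ → ℕ → ℕ} (hF : Computable₂ F) :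
    RecursiveInOracle (fun n => Part.some (g n)) fun n => Part.some (F n (g n)) := by
  have hF' : Computable fun p : ℕ => F p.unpair.1 p.unpair.2 :=
    hF.comp (Computable.fst.comp Computable.unpair) (Computable.snd.comp Computable.unpair)
  have hid : RecursiveInOracle (fun n => Part.some (g n)) ↑(id : ℕ → ℕ) :=
    .of_partrec (Partrec.nat_iff.mp Computable.id.partrec)
  have hval : (fun n => Part.some (F n (g n))) = fun n =>
      (Nat.pair <$> Part.some n <*> Part.some (g n)) >>=
        fun p => Part.some (F p.unpair.1 p.unpair.2) := by
    funext n
    simp [Seq.seq]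
  rw [hval]
  exact .comp (.of_partrec (Partrec.nat_iff.mp hF'.partrec)) (.pair hid .oracle)

theorem RecursiveInOracle.chi_of_computable₂ {A : Set ℕ} {g : ℕ → ℕ} {p : ℕ → ℕ → Bool}
    (hp : Computable₂ p) (hA : ∀ n, n ∈ A ↔ p n (g n) = true) :
    RecursiveInOracle (fun n => Part.some (g n)) (chi A) := by
  have hF : Computable₂ fun n s => cond (p n s) 1 0 :=
    Computable.cond hp (Computable.const 1) (Computable.const 0)
  have hval : chi A = fun n => Part.some (cond (p n (g n)) 1 0) := by
    funext n
    by_cases hn : p n (g n) <;> simp [chi, hA, hn]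
  rw [hval]
  exact .of_computable₂ hF

theorem Computable₂.ite_lt {α : Type*} [Primcodable α] {p : ℕ → ℕ → α} (hp : Computable₂ p)
    (N : ℕ) (t : ℕ → α) : Computable₂ fun n s => if n < N then t n else p n s := by
  have htable : Computable fun n => ((List.range N).map t).getD n (t 0) :=
    ((Primrec.list_getD (t 0)).comp (Primrec.const _) Primrec.id).to_comp
  refine (Computable.cond ((Primrec.nat_lt.comp Primrec.fst (Primrec.const N)).decide.to_comp)
    (htable.comp Computable.fst) hp).of_eq fun ⟨n, s⟩ => ?_
  by_cases hn : n < N <;> simp [hn]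

def haltsWithin (e s : ℕ) : Bool :=
  (Code.evaln s (Denumerable.ofNat Code e) e).isSome

theorem primrec₂_haltsWithin : Primrec₂ haltsWithin :=
  Primrec.option_isSome.comp <| Code.primrec_evaln.comp <|
    (Primrec.snd.pair ((Primrec.ofNat Code).comp Primrec.fst)).pair Primrec.fst

theorem haltsWithin_mono {e s t : ℕ} (hst : s ≤ t) (h : haltsWithin e s = true) :
    haltsWithin e t = true := by
  obtain ⟨y, hy⟩ := Option.isSome_iff_exists.mp h
  exact Option.isSome_iff_exists.mpr ⟨y, Code.evaln_mono hst hy⟩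

theorem mem_haltingSet_iff_exists_haltsWithin {e : ℕ} :
    e ∈ HaltingSet ↔ ∃ s, haltsWithin e s = true := by
  simp only [HaltingSet, Set.mem_ofPred_eq, Part.dom_iff_mem, Code.evaln_complete, haltsWithin,
    Option.isSome_iff_exists]
  exact exists_comm

def haltingTime : ℕ →. ℕ := fun e => Nat.rfind fun s => Part.some (haltsWithin e s)

theorem partrec_haltingTime : Nat.Partrec haltingTime :=
  Partrec.nat_iff.mp <| Partrec.rfind primrec₂_haltsWithin.to_comp.partrec₂

theorem haltsWithin_of_mem_haltingTime {e s : ℕ} (h : s ∈ haltingTime e) :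
    haltsWithin e s = true := by
  simpa using Nat.rfind_spec h

theorem haltingTime_dom_of_mem_haltingSet {e : ℕ} (he : e ∈ HaltingSet) :
    (haltingTime e).Dom := by
  obtain ⟨s, hs⟩ := mem_haltingSet_iff_exists_haltsWithin.mp he
  exact Nat.rfind_dom.mpr ⟨s, by simp [hs], fun _ => trivial⟩

theorem mem_haltingSet_iff_haltsWithin_of_forall_lt {e b : ℕ}
    (hb : ∀ s ∈ haltingTime e, s < b) : e ∈ HaltingSet ↔ haltsWithin e b = true := by
  refine ⟨fun he => ?_, fun h => mem_haltingSet_iff_exists_haltsWithin.mpr ⟨b, h⟩⟩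
  obtain ⟨s, hs⟩ := Part.dom_iff_mem.mp (haltingTime_dom_of_mem_haltingSet he)
  exact haltsWithin_mono (hb s hs).le (haltsWithin_of_mem_haltingTime hs)

/-- Martin–Tennenbaum: if g dominates every partial computable
function then ∅′ ≤_T g. -/
theorem halting_le_dominating (g : ℕ → ℕ)
    (hdom : ∀ e : ℕ, ∃ N : ℕ, ∀ i ≥ N,
      ∀ y ∈ (Denumerable.ofNat Nat.Partrec.Code e).eval i, y < g i) :
    RecursiveInOracle (fun n => Part.some (g n)) (chi HaltingSet) := by
  classical
  obtain ⟨c, hc⟩ := Code.exists_code.mp partrec_haltingTime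
  obtain ⟨N, hN⟩ := hdom (Encodable.encode c)
  rw [Denumerable.ofNat_encode, hc] at hN
  refine .chi_of_computable₂
    (primrec₂_haltsWithin.to_comp.ite_lt N fun n => decide (n ∈ HaltingSet)) fun n => ?_
  split_ifs with hn
  · simp
  · exact mem_haltingSet_iff_haltsWithin_of_forall_lt (hN n (not_lt.mp hn))
end

section
/- No ceer all of whose equivalence classes are finite is hyperhyperdark: if R is a ceer with infinitely many classes and every R-class is finite, then R has an infinite transversal that is not hyperhyperimmune, i.e., intersected by a weak disjoint array. -/
/-- A weak disjoint array: a uniformly c.e. sequence of pairwise-disjoint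
finite sets. -/
def WeakArray (F : ℕ → Set ℕ) : Prop :=
  REPred (fun p : ℕ × ℕ => p.2 ∈ F p.1) ∧ (∀ n, (F n).Finite) ∧
    ∀ m n, m ≠ n → Disjoint (F m) (F n)

/-!
Approximate `R` by primitive recursive stages `A s`. The `n`-th marker lives in column `n`
(the numbers `⟪n, k⟫`) and moves up its column whenever the current stage makes it equivalent
to an earlier marker. Once the earlier markers have settled, every later move puts the `n`-th
marker into one of finitely many finite classes, so it moves only finitely often: all markers
settle. Their limits form an infinite transversal `T`, and the sets `F n` of all positions ever
held by the `n`-th marker are uniformly c.e., finite, pairwise disjoint (they lie in different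
columns), and each of them meets `T`.
-/

open Filter
open Nat.Partrec (Code)

theorem REPred.exists_primrec_approx {α : Type*} [Primcodable α] {p : α → Prop}
    (hp : REPred p) : ∃ A : ℕ → α → Bool, Primrec₂ A ∧ Monotone A ∧ ∀ a, p a ↔ ∃ s, A s a := by
  obtain ⟨c, hc⟩ := Code.exists_code.1 hp
  refine ⟨fun s a => (c.evaln s (Encodable.encode a)).isSome, ?_, ?_, fun a => ?_⟩
  · exact Primrec.option_isSome.comp (Code.primrec_evaln.comp
      ((Primrec.fst.pair (Primrec.const c)).pair (Primrec.encode.comp Primrec.snd)))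
  · intro s t hst a
    simp only [Bool.le_iff_imp, Option.isSome_iff_exists]
    exact fun ⟨x, hx⟩ => ⟨x, Code.evaln_mono hst hx⟩
  · have hdom : p a ↔ (c.eval (Encodable.encode a)).Dom := by
      simp [hc, Part.assert, exists_prop]
    simp only [hdom, Part.dom_iff_mem, Code.evaln_complete, Option.isSome_iff_exists]
    exact ⟨fun ⟨x, s, h⟩ => ⟨s, x, h⟩, fun ⟨s, x, h⟩ => ⟨x, s, h⟩⟩

theorem ComputablePred.rePred_exists {α : Type*} [Primcodable α] {q : α → ℕ → Prop}
    (hq : ComputablePred fun p : α × ℕ => q p.1 p.2) : REPred fun a => ∃ s, q a s := by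
  obtain ⟨_, hd⟩ := hq
  refine (Partrec.rfind (p := fun a s => Part.some (decide ((fun p : α × ℕ => q p.1 p.2) (a, s))))
    hd.partrec).dom_re.of_eq fun a => ?_
  refine Nat.rfind_dom.trans ?_
  simp

theorem List.getD_map_range {α : Type*} {f : ℕ → α} {d : α} {n m : ℕ} (hm : m < n) :
    ((List.range n).map f).getD m d = f m := by
  simp [List.getD_eq_getElem?_getD, hm]

theorem Nat.exists_forall_ge_eq_of_monotone_of_bddAbove {f : ℕ → ℕ} (hf : Monotone f)
    (hb : BddAbove (Set.range f)) : ∃ t, ∀ s ≥ t, f s = f t := by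
  obtain ⟨t, ht⟩ := Nat.sSup_mem (Set.range_nonempty f) hb
  exact ⟨t, fun s hs => le_antisymm (ht ▸ le_csSup hb ⟨s, rfl⟩) (hf hs)⟩

namespace Marker

variable (A : ℕ → ℕ × ℕ → Bool)

def Bumped (v : ℕ → ℕ) (s n : ℕ) : Prop :=
  ∃ m < n, A s (Nat.pair m (v m), Nat.pair n (v n))

instance (v : ℕ → ℕ) (s n : ℕ) : Decidable (Bumped A v s n) :=
  inferInstanceAs (Decidable (∃ m < n, _))

/-- The `n`-th marker at stage `s` is the number `⟪n, marker A s n⟫`. -/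
def marker : ℕ → ℕ → ℕ
  | 0, _ => 0
  | s + 1, n => marker s n + if Bumped A (marker s) s n then 1 else 0

theorem marker_succ (s n : ℕ) :
    marker A (s + 1) n = marker A s n + if Bumped A (marker A s) s n then 1 else 0 := rfl

theorem marker_succ_of_bumped {s n : ℕ} (h : Bumped A (marker A s) s n) :
    marker A (s + 1) n = marker A s n + 1 := by
  rw [marker_succ, if_pos h]

theorem monotone_marker (n : ℕ) : Monotone (marker A · n) :=
  monotone_nat_of_le_succ fun s => by rw [marker_succ]; exact Nat.le_add_right _ _

theorem marker_le_of_eventually_eq {n k : ℕ} (hk : ∀ᶠ s in atTop, marker A s n = k) (s : ℕ) :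
    marker A s n ≤ k := by
  obtain ⟨t, hst, ht⟩ := ((eventually_ge_atTop s).and hk).exists
  exact ht ▸ monotone_marker A n hst

variable {A} {R : ℕ → ℕ → Prop}

theorem marker_le_of_stable (hAR : ∀ s x y, A s (x, y) → R x y) {n t B : ℕ}
    (ht : ∀ s ≥ t, ∀ m < n, marker A s m = marker A t m)
    (hB : ∀ m < n, ∀ y, R (Nat.pair m (marker A t m)) y → y ≤ B) (s : ℕ) :
    marker A s n ≤ max (marker A t n) (B + 1) := by
  induction s with
  | zero => exact Nat.zero_le _
  | succ s ih =>
    by_cases hb : Bumped A (marker A s) s n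
    · rw [marker_succ_of_bumped A hb]
      by_cases hts : t ≤ s
      · obtain ⟨m, hm, hA⟩ := hb
        rw [ht s hts m hm] at hA
        have := (Nat.right_le_pair _ _).trans (hB m hm _ (hAR _ _ _ hA))
        omega
      · have : marker A (s + 1) n ≤ marker A t n := monotone_marker A n (not_le.1 hts)
        rw [marker_succ_of_bumped A hb] at this
        omega
    · rwa [marker_succ, if_neg hb, add_zero]

theorem exists_forall_ge_marker_eq (hAR : ∀ s x y, A s (x, y) → R x y)
    (hfin : ∀ x, {y | R x y}.Finite) (n : ℕ) :
    ∃ t, ∀ s ≥ t, ∀ m < n, marker A s m = marker A t m := by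
  induction n with
  | zero => exact ⟨0, by simp⟩
  | succ n ih =>
    obtain ⟨t, ht⟩ := ih
    obtain ⟨B, hB⟩ : ∃ B, ∀ m < n, ∀ y, R (Nat.pair m (marker A t m)) y → y ≤ B := by
      obtain ⟨B, hB⟩ := ((Set.finite_lt_nat n).biUnion fun m _ => hfin _).bddAbove
      exact ⟨B, fun m hm y hy => hB (Set.mem_biUnion hm hy)⟩
    obtain ⟨t', ht'⟩ := Nat.exists_forall_ge_eq_of_monotone_of_bddAbove (monotone_marker A n)
      ⟨_, Set.forall_mem_range.2 (marker_le_of_stable hAR ht hB)⟩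
    refine ⟨max t t', fun s hs m hm => ?_⟩
    rcases Nat.lt_succ_iff_lt_or_eq.1 hm with hm | rfl
    · rw [ht s (le_of_max_le_left hs) m hm, ht _ (le_max_left _ _) m hm]
    · rw [ht' s (le_of_max_le_right hs), ht' _ (le_max_right _ _)]

theorem exists_eventually_marker_eq (hAR : ∀ s x y, A s (x, y) → R x y)
    (hfin : ∀ x, {y | R x y}.Finite) (n : ℕ) : ∃ k, ∀ᶠ s in atTop, marker A s n = k := by
  obtain ⟨t, ht⟩ := exists_forall_ge_marker_eq hAR hfin (n + 1)
  exact ⟨marker A t n, eventually_atTop.2 ⟨t, fun s hs => ht s hs n n.lt_succ_self⟩⟩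

theorem not_rel_marker_limits (hRA : ∀ x y, R x y → ∃ s, A s (x, y)) (hA : Monotone A)
    {k : ℕ → ℕ} (hk : ∀ n, ∀ᶠ s in atTop, marker A s n = k n) {m n : ℕ} (hmn : m < n) :
    ¬ R (Nat.pair m (k m)) (Nat.pair n (k n)) := by
  intro hR
  obtain ⟨s₀, hs₀⟩ := hRA _ _ hR
  obtain ⟨s, hs, hsm, hsn, hsn'⟩ := ((eventually_ge_atTop s₀).and ((hk m).and ((hk n).and
    ((tendsto_add_atTop_nat 1).eventually (hk n))))).exists
  have hb : Bumped A (marker A s) s n :=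
    ⟨m, hmn, by rw [hsm, hsn]; exact Bool.le_iff_imp.1 (hA hs _) hs₀⟩
  have := marker_succ_of_bumped A hb
  omega

section Primrec

variable (A)

/-- One stage of the construction, run on a list `L` of marker positions: carrying the initial
segment of positions as a list makes `marker` primitive recursive. -/
def markerStep (s : ℕ) (L : List ℕ) (k : ℕ) : ℕ :=
  L.getD k 0 + if Bumped A (L.getD · 0) s k then 1 else 0

theorem bumped_congr {v w : ℕ → ℕ} {s n : ℕ} (h : ∀ m ≤ n, v m = w m) :
    Bumped A v s n ↔ Bumped A w s n := by
  unfold Bumped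
  refine exists_congr fun m => and_congr_right fun hm => ?_
  rw [h m hm.le, h n le_rfl]

theorem map_range_marker_succ (n s : ℕ) :
    (List.range (n + 1)).map (marker A (s + 1)) =
      (List.range (n + 1)).map (markerStep A s ((List.range (n + 1)).map (marker A s))) := by
  refine List.map_congr_left fun k hk => ?_
  have hkn : k < n + 1 := List.mem_range.1 hk
  simp only [markerStep, marker_succ, List.getD_map_range hkn,
    bumped_congr A fun m hm => List.getD_map_range (hm.trans_lt hkn)]

theorem primrec_markerStep (hA : Primrec₂ A) :
    Primrec fun x : (ℕ × List ℕ) × ℕ => markerStep A x.1.1 x.1.2 x.2 := by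
  have hget : Primrec₂ fun (L : List ℕ) (k : ℕ) => L.getD k 0 := Primrec.list_getD 0
  have hpos : Primrec₂ fun (x : (ℕ × List ℕ) × ℕ) (k : ℕ) => Nat.pair k (x.1.2.getD k 0) :=
    Primrec₂.natPair.comp Primrec.snd (hget.comp (Primrec.snd.comp (Primrec.fst.comp Primrec.fst))
      Primrec.snd)
  have hrel : PrimrecRel fun (m : ℕ) (x : (ℕ × List ℕ) × ℕ) =>
      A x.1.1 (Nat.pair m (x.1.2.getD m 0), Nat.pair x.2 (x.1.2.getD x.2 0)) = true :=
    ⟨inferInstance, Primrec.eq.comp (hA.comp (Primrec.fst.comp (Primrec.fst.comp Primrec.snd))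
      ((hpos.comp Primrec.snd Primrec.fst).pair (hpos.comp Primrec.snd (Primrec.snd.comp
        Primrec.snd)))) (Primrec.const true) |>.decide⟩
  have hbumped : PrimrecPred fun x : (ℕ × List ℕ) × ℕ => Bumped A (x.1.2.getD · 0) x.1.1 x.2 :=
    (hrel.exists_mem_list.comp (Primrec.list_range.comp Primrec.snd) Primrec.id).of_eq
      fun x => by simp [Bumped]
  exact Primrec.nat_add.comp (hget.comp (Primrec.snd.comp Primrec.fst) Primrec.snd)
    (Primrec.ite hbumped (Primrec.const 1) (Primrec.const 0))

theorem primrec_marker (hA : Primrec₂ A) : Primrec₂ (marker A) := by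
  have hprefix : Primrec₂ fun n s => (List.range (n + 1)).map (marker A s) := by
    refine (Primrec.nat_rec (f := fun n => (List.range (n + 1)).map fun _ => 0)
      (g := fun n p => (List.range (n + 1)).map (markerStep A p.1 p.2)) ?_ ?_).of_eq
      fun n s => ?_
    · exact Primrec.list_map (Primrec.list_range.comp Primrec.succ) (Primrec₂.const 0)
    · exact Primrec.list_map (Primrec.list_range.comp (Primrec.succ.comp Primrec.fst))
        ((primrec_markerStep A hA).comp ((Primrec.snd.comp Primrec.fst).pair Primrec.snd))
    · induction s with
      | zero => rfl
      | succ s ih => simp only [ih, map_range_marker_succ]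
  exact ((Primrec.list_getD 0).comp (hprefix.comp Primrec.snd Primrec.fst) Primrec.snd).of_eq
    fun p => List.getD_map_range p.2.lt_succ_self

end Primrec

variable {k : ℕ → ℕ}

theorem isTransversal_range_marker_limits (hR : ∀ x y, R x y → R y x)
    (hRA : ∀ x y, R x y → ∃ s, A s (x, y)) (hA : Monotone A)
    (hk : ∀ n, ∀ᶠ s in atTop, marker A s n = k n) :
    IsTransversal R (Set.range fun n => Nat.pair n (k n)) := by
  rintro _ ⟨m, rfl⟩ _ ⟨n, rfl⟩ hne
  rcases lt_or_gt_of_ne fun h : m = n => hne (h ▸ rfl) with hmn | hmn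
  · exact not_rel_marker_limits hRA hA hk hmn
  · exact fun h => not_rel_marker_limits hRA hA hk hmn (hR _ _ h)

theorem weakArray_range_marker (hA : Primrec₂ A) (hk : ∀ n, ∀ᶠ s in atTop, marker A s n = k n) :
    WeakArray fun n => Set.range fun s => Nat.pair n (marker A s n) := by
  refine ⟨?_, fun n => ?_, fun m n hmn => ?_⟩
  · have hq : PrimrecPred fun x : (ℕ × ℕ) × ℕ => Nat.pair x.1.1 (marker A x.2 x.1.1) = x.1.2 :=
      Primrec.eq.comp (Primrec₂.natPair.comp (Primrec.fst.comp Primrec.fst)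
        ((primrec_marker A hA).comp Primrec.snd (Primrec.fst.comp Primrec.fst)))
        (Primrec.snd.comp Primrec.fst)
    exact ComputablePred.rePred_exists hq.computablePred
  · exact ((Set.finite_Iic (k n)).image (Nat.pair n)).subset
      (Set.range_subset_iff.2 fun s => ⟨_, marker_le_of_eventually_eq A (hk n) s, rfl⟩)
  · rw [Set.disjoint_left]
    rintro _ ⟨s, rfl⟩ ⟨t, h⟩
    exact hmn (Nat.pair_eq_pair.1 h).1.symm

end Marker

theorem finite_classes_not_hyperhyperdark_general (R : ℕ → ℕ → Prop) (hR : Ceer R)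
    (hfin : ∀ x : ℕ, {y | R x y}.Finite) :
    ∃ (T : Set ℕ) (F : ℕ → Set ℕ), IsTransversal R T ∧ T.Infinite ∧
      WeakArray F ∧ ∀ n, (F n ∩ T).Nonempty := by
  obtain ⟨A, hA, hAmono, hAR⟩ := hR.2.exists_primrec_approx
  have hsound : ∀ s x y, A s (x, y) → R x y := fun s x y h => (hAR (x, y)).2 ⟨s, h⟩
  have hcomplete : ∀ x y, R x y → ∃ s, A s (x, y) := fun x y h => (hAR (x, y)).1 h
  choose k hk using Marker.exists_eventually_marker_eq hsound hfin
  refine ⟨Set.range fun n => Nat.pair n (k n),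
    fun n => Set.range fun s => Nat.pair n (Marker.marker A s n),
    Marker.isTransversal_range_marker_limits (fun _ _ => hR.1.symm) hcomplete hAmono hk,
    Set.infinite_range_of_injective fun m n h => (Nat.pair_eq_pair.1 h).1,
    Marker.weakArray_range_marker hA hk, fun n => ?_⟩
  obtain ⟨s, hs⟩ := (hk n).exists
  exact ⟨_, ⟨s, congrArg _ hs⟩, n, rfl⟩

/-- a ceer with infinitely many classes, all finite, has an
infinite transversal that is not hyperhyperimmune, i.e. intersected by a weak
disjoint array. -/
theorem finite_classes_not_hyperhyperdark (R : ℕ → ℕ → Prop) (hR : Ceer R)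
    (hinf : InfiniteClasses R) (hfin : ∀ x : ℕ, {y | R x y}.Finite) :
    ∃ (T : Set ℕ) (F : ℕ → Set ℕ), IsTransversal R T ∧ T.Infinite ∧
      WeakArray F ∧ ∀ n, (F n ∩ T).Nonempty :=
  finite_classes_not_hyperhyperdark_general R hR hfin
end

section
/- For every ceer R, the semigroup S(R) presented on generators {a, b} by the relations {a b^{i+1} a = a b^{j+1} a : i R j} ∪ {v = w : v, w both properly contain a subword of the form a b^i a with i ≥ 1} has word problem computably bi-reducible with R ⊕ Id_ω, where Id_ω is the identity relation on ℕ. -/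
/-- The free semigroup on the two generators a, b, realized as nonempty words:
a first letter together with the list of remaining letters
(`false` codes a, `true` codes b). -/
abbrev Word : Type := Bool × List Bool

instance : Mul Word := ⟨fun u v => (u.1, u.2 ++ v.1 :: v.2)⟩

instance : Semigroup Word :=
  { mul_assoc := by intro a b c; simp [HMul.hMul, Mul.mul] }

/-- The underlying list of letters of a word. -/
def wlist (u : Word) : List Bool := u.1 :: u.2

/-- `Subword y x`: y occurs as a (contiguous) subword of x. -/
def Subword (y x : Word) : Prop :=
  ∃ p s : List Bool, wlist x = p ++ wlist y ++ s

/-- The coding word a b^i a. -/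
def abia (i : ℕ) : Word := (false, List.replicate i true ++ [false])

/-- Words of the set C: coding words a b^i a, i ≠ 0. -/
def isCoding (u : Word) : Prop := ∃ i : ℕ, i ≠ 0 ∧ u = abia i

/-- Words of C₊ : words which properly contain a coding word as a subword. -/
def inCplus (u : Word) : Prop :=
  ¬ isCoding u ∧ ∃ i : ℕ, i ≠ 0 ∧ Subword (abia i) u

/-- Computable reducibility between equivalence relations on coded types. -/
def ReducesT {α β : Type} [Primcodable α] [Primcodable β]
    (R : α → α → Prop) (S : β → β → Prop) : Prop :=
  ∃ f : α → β, Computable f ∧ ∀ x y, R x y ↔ S (f x) (f y)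

/-- The uniform join of two equivalence relations on ℕ (evens code the first
relation, odds the second). -/
def rjoin (R S : ℕ → ℕ → Prop) : ℕ → ℕ → Prop := fun x y =>
  (∃ a b, x = 2 * a ∧ y = 2 * b ∧ R a b) ∨
  (∃ a b, x = 2 * a + 1 ∧ y = 2 * b + 1 ∧ S a b)

/-- The defining relations of the semigroup S(R). -/
def baseRel (R : ℕ → ℕ → Prop) : Word → Word → Prop := fun u v =>
  (∃ i j, R i j ∧ u = abia (i + 1) ∧ v = abia (j + 1)) ∨ (inCplus u ∧ inCplus v)

/-- The word problem of S(R): the semigroup congruence generated by the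
defining relations. -/
def wordProblemS (R : ℕ → ℕ → Prop) : Word → Word → Prop :=
  fun u v => conGen (baseRel R) u v


/-!
Every defining relation of `S(R)` other than those among the coding words `a b^(i+1) a`
identifies two words of `C₊`, and `C₊` absorbs multiplication: a product one of whose factors
contains a coding word is itself in `C₊`. Hence the defining relations together with equality
already form a congruence, so the word problem relates `a b^(i+1) a` and `a b^(j+1) a` iff
`i R j`, collapses `C₊` to a single class, and is equality elsewhere. Sending coding words to
even numbers, `C₊` to `1` and all other words injectively to odd numbers `≥ 3` reduces it to
`R ⊕ Id`; conversely `2a ↦ a b^(a+1) a`, `2a + 1 ↦ b^(a+1)` reduces `R ⊕ Id` to it. Both maps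
are primitive recursive because membership in `C` and `C₊` is decided by a bounded search.
-/

open List

theorem List.isInfix_iff_exists_isPrefix_drop {α : Type*} {l₁ l₂ : List α} :
    l₁ <:+: l₂ ↔ ∃ n < l₂.length + 1, l₁ <+: l₂.drop n := by
  rw [infix_iff_prefix_suffix]
  constructor
  · rintro ⟨t, hpre, hsuf⟩
    exact ⟨l₂.length - t.length, by omega, suffix_iff_eq_drop.1 hsuf ▸ hpre⟩
  · rintro ⟨n, -, h⟩
    exact ⟨_, h, drop_suffix n l₂⟩

theorem Primrec.list_isInfix {α : Type*} [Primcodable α] :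
    PrimrecRel fun l₁ l₂ : List α => l₁ <:+: l₂ := by
  have hpre :
      PrimrecRel fun (n : ℕ) (p : List α × List α) => (p.2.drop n).take p.1.length = p.1 :=
    Primrec.eq.comp₂
      (Primrec.list_take.comp₂
        (Primrec.list_length.comp₂ (Primrec.fst.comp₂ Primrec₂.right))
        (Primrec.list_drop.comp₂ Primrec₂.left (Primrec.snd.comp₂ Primrec₂.right)))
      (Primrec.fst.comp₂ Primrec₂.right)
  refine (hpre.exists_mem_list.comp
    (Primrec.list_range.comp (Primrec.succ.comp (Primrec.list_length.comp Primrec.snd)))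
    Primrec.id).of_eq ?_
  rintro ⟨l₁, l₂⟩
  simp [List.isInfix_iff_exists_isPrefix_drop, prefix_iff_eq_take, eq_comm]

theorem wlist_mul (u v : Word) : wlist (u * v) = wlist u ++ wlist v := rfl

theorem wlist_abia (i : ℕ) : wlist (abia i) = false :: (replicate i true ++ [false]) := rfl

theorem length_wlist_abia (i : ℕ) : (wlist (abia i)).length = i + 2 := by
  simp [wlist_abia]

theorem count_false_wlist_abia (i : ℕ) : (wlist (abia i)).count false = 2 := by
  simp [wlist_abia, count_replicate]

theorem abia_injective : Function.Injective abia := fun i j h => by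
  simpa [abia] using congrArg (fun u : Word => u.2.length) h

theorem subword_iff_isInfix {y x : Word} : Subword y x ↔ wlist y <:+: wlist x := by
  simp only [Subword, IsInfix, eq_comm]

theorem Subword.mul_right {y x : Word} (h : Subword y x) (z : Word) : Subword y (x * z) := by
  rw [subword_iff_isInfix, wlist_mul] at *
  exact h.trans (prefix_append _ _).isInfix

theorem Subword.mul_left {y x : Word} (h : Subword y x) (z : Word) : Subword y (z * x) := by
  rw [subword_iff_isInfix, wlist_mul] at *
  exact h.trans (suffix_append _ _).isInfix

def HasCodingSubword (u : Word) : Prop := ∃ i, i ≠ 0 ∧ Subword (abia i) u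

theorem HasCodingSubword.mul_right {u : Word} (h : HasCodingSubword u) (v : Word) :
    HasCodingSubword (u * v) :=
  h.imp fun _ ⟨hi, hs⟩ => ⟨hi, hs.mul_right v⟩

theorem HasCodingSubword.mul_left {u : Word} (h : HasCodingSubword u) (v : Word) :
    HasCodingSubword (v * u) :=
  h.imp fun _ ⟨hi, hs⟩ => ⟨hi, hs.mul_left v⟩

theorem HasCodingSubword.two_le_count_false {u : Word} (h : HasCodingSubword u) :
    2 ≤ (wlist u).count false := by
  obtain ⟨i, -, hs⟩ := h
  simpa [count_false_wlist_abia] using (subword_iff_isInfix.1 hs).count_le false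

theorem isCoding_iff {u : Word} : isCoding u ↔ ∃ i, u = abia (i + 1) := by
  constructor
  · rintro ⟨_ | i, hi, rfl⟩
    exacts [absurd rfl hi, ⟨i, rfl⟩]
  · rintro ⟨i, rfl⟩
    exact ⟨i + 1, i.succ_ne_zero, rfl⟩

theorem isCoding.hasCodingSubword {u : Word} (h : isCoding u) : HasCodingSubword u := by
  obtain ⟨i, hi, rfl⟩ := h
  exact ⟨i, hi, [], [], by simp⟩

theorem not_inCplus_abia (i : ℕ) : ¬ inCplus (abia (i + 1)) :=
  fun h => h.1 (isCoding_iff.2 ⟨i, rfl⟩)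

/-- A coding word has exactly two letters `a`, at its two ends, so no factor of it can contain
a coding word. -/
theorem not_isCoding_mul {u v : Word} (h : HasCodingSubword u ∨ HasCodingSubword v) :
    ¬ isCoding (u * v) := by
  rintro ⟨i, -, huv⟩
  have hcount : (wlist u).count false + (wlist v).count false = 2 := by
    rw [← count_append, ← wlist_mul, huv, count_false_wlist_abia]
  have hu : 0 < (wlist u).count false := by
    have : u.1 = false := congrArg Prod.fst huv
    exact count_pos_iff.2 (this ▸ mem_cons_self)
  have hv : 0 < (wlist v).count false := by
    have hlast : (wlist v).getLast? = some false := by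
      rw [← getLast?_append_of_ne_nil (wlist u) (show wlist v ≠ [] from cons_ne_nil _ _),
        ← wlist_mul, huv, wlist_abia, ← cons_append, getLast?_concat]
    exact count_pos_iff.2 (mem_of_getLast? hlast)
  rcases h with h | h <;> have := h.two_le_count_false <;> omega

theorem inCplus_mul {u v : Word} (h : HasCodingSubword u ∨ HasCodingSubword v) :
    inCplus (u * v) :=
  ⟨not_isCoding_mul h, h.elim (·.mul_right v) (·.mul_left u)⟩

section Congruence

variable {R : ℕ → ℕ → Prop}

theorem baseRel.hasCodingSubword {u v : Word} (h : baseRel R u v) :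
    HasCodingSubword u ∧ HasCodingSubword v := by
  rcases h with ⟨i, j, -, rfl, rfl⟩ | ⟨hu, hv⟩
  exacts [⟨(isCoding_iff.2 ⟨i, rfl⟩).hasCodingSubword,
      (isCoding_iff.2 ⟨j, rfl⟩).hasCodingSubword⟩, ⟨hu.2, hv.2⟩]

theorem baseRel_symm (hR : Equivalence R) {u v : Word} (h : baseRel R u v) : baseRel R v u :=
  h.imp (fun ⟨i, j, hij, hu, hv⟩ => ⟨j, i, hR.symm hij, hv, hu⟩) And.symm

theorem baseRel_trans (hR : Equivalence R) {u v w : Word} (h₁ : baseRel R u v)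
    (h₂ : baseRel R v w) : baseRel R u w := by
  rcases h₁ with ⟨i, j, hij, rfl, rfl⟩ | ⟨hu, hv⟩ <;>
    rcases h₂ with ⟨j', k, hjk, hj, rfl⟩ | ⟨hv', hw⟩
  · obtain rfl : j = j' := by simpa using abia_injective hj
    exact Or.inl ⟨i, k, hR.trans hij hjk, rfl, rfl⟩
  · exact absurd hv' (not_inCplus_abia j)
  · exact absurd (hj ▸ hv) (not_inCplus_abia j')
  · exact Or.inr ⟨hu, hw⟩

def baseCon (hR : Equivalence R) : Con Word where
  r u v := u = v ∨ baseRel R u v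
  iseqv :=
    { refl := fun _ => Or.inl rfl
      symm := Or.imp Eq.symm (baseRel_symm hR)
      trans := by
        rintro u v w (rfl | h₁) (rfl | h₂)
        exacts [Or.inl rfl, Or.inr h₂, Or.inr h₁, Or.inr (baseRel_trans hR h₁ h₂)] }
  mul' := by
    rintro w x y z (rfl | h₁) (rfl | h₂)
    · exact Or.inl rfl
    · exact Or.inr (Or.inr ⟨inCplus_mul (Or.inr h₂.hasCodingSubword.1),
        inCplus_mul (Or.inr h₂.hasCodingSubword.2)⟩)
    all_goals exact Or.inr (Or.inr ⟨inCplus_mul (Or.inl h₁.hasCodingSubword.1),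
        inCplus_mul (Or.inl h₁.hasCodingSubword.2)⟩)

theorem wordProblemS_iff (hR : Equivalence R) {u v : Word} :
    wordProblemS R u v ↔ u = v ∨ baseRel R u v := by
  have : conGen (baseRel R) = baseCon hR :=
    le_antisymm (Con.conGen_le.2 fun _ _ => Or.inr)
      fun u v h => h.elim (· ▸ (conGen _).refl u) (ConGen.Rel.of u v)
  rw [wordProblemS, this]
  rfl

end Congruence

theorem rjoin_refl {R S : ℕ → ℕ → Prop} (hR : ∀ a, R a a) (hS : ∀ a, S a a) (n : ℕ) :
    rjoin R S n n := by
  rcases Nat.even_or_odd' n with ⟨a, rfl | rfl⟩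
  exacts [Or.inl ⟨a, a, rfl, rfl, hR a⟩, Or.inr ⟨a, a, rfl, rfl, hS a⟩]

theorem word_trichotomy (u : Word) :
    (∃ i, u = abia (i + 1)) ∨ inCplus u ∨ ¬ HasCodingSubword u := by
  by_cases hc : isCoding u
  · exact Or.inl (isCoding_iff.1 hc)
  · by_cases hs : HasCodingSubword u
    exacts [Or.inr (Or.inl ⟨hc, hs⟩), Or.inr (Or.inr hs)]

noncomputable def toJoin (u : Word) : ℕ :=
  open Classical in
  if isCoding u then 2 * (u.2.length - 2)
  else if inCplus u then 1
  else 2 * Encodable.encode u + 3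

theorem toJoin_abia (i : ℕ) : toJoin (abia (i + 1)) = 2 * i := by
  rw [toJoin, if_pos (isCoding_iff.2 ⟨i, rfl⟩)]
  simp [abia]

theorem toJoin_of_inCplus {u : Word} (h : inCplus u) : toJoin u = 1 := by
  rw [toJoin, if_neg h.1, if_pos h]

theorem toJoin_of_not_hasCodingSubword {u : Word} (h : ¬ HasCodingSubword u) :
    toJoin u = 2 * Encodable.encode u + 3 := by
  rw [toJoin, if_neg (mt isCoding.hasCodingSubword h), if_neg fun hc : inCplus u => h hc.2]

theorem toJoin_eq_two_mul_iff {u : Word} {i : ℕ} : toJoin u = 2 * i ↔ u = abia (i + 1) := by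
  refine ⟨fun h => ?_, fun h => h ▸ toJoin_abia i⟩
  rcases word_trichotomy u with ⟨j, rfl⟩ | hu | hu
  · rw [toJoin_abia] at h
    rw [show j = i by omega]
  · rw [toJoin_of_inCplus hu] at h
    omega
  · rw [toJoin_of_not_hasCodingSubword hu] at h
    omega

theorem eq_or_inCplus_of_toJoin_eq {u v : Word} (h : toJoin u = toJoin v) :
    u = v ∨ inCplus u ∧ inCplus v := by
  rcases word_trichotomy u with ⟨i, rfl⟩ | hu | hu
  · exact Or.inl (toJoin_eq_two_mul_iff.1 (h.symm.trans (toJoin_abia i))).symm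
  all_goals rcases word_trichotomy v with ⟨j, rfl⟩ | hv | hv
  · exact Or.inl (toJoin_eq_two_mul_iff.1 (h.trans (toJoin_abia j)))
  · exact Or.inr ⟨hu, hv⟩
  · rw [toJoin_of_inCplus hu, toJoin_of_not_hasCodingSubword hv] at h
    omega
  · exact Or.inl (toJoin_eq_two_mul_iff.1 (h.trans (toJoin_abia j)))
  · rw [toJoin_of_not_hasCodingSubword hu, toJoin_of_inCplus hv] at h
    omega
  · rw [toJoin_of_not_hasCodingSubword hu, toJoin_of_not_hasCodingSubword hv] at h
    exact Or.inl (Encodable.encode_injective (by omega))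

theorem eq_or_baseRel_iff_rjoin_toJoin {R : ℕ → ℕ → Prop} (hR : ∀ i, R i i) {u v : Word} :
    u = v ∨ baseRel R u v ↔ rjoin R (· = ·) (toJoin u) (toJoin v) := by
  constructor
  · rintro (rfl | ⟨i, j, hij, rfl, rfl⟩ | ⟨hu, hv⟩)
    · exact rjoin_refl hR (fun _ => rfl) _
    · exact Or.inl ⟨i, j, toJoin_abia i, toJoin_abia j, hij⟩
    · exact Or.inr ⟨0, 0, toJoin_of_inCplus hu, toJoin_of_inCplus hv, rfl⟩
  · rintro (⟨i, j, hu, hv, hij⟩ | ⟨a, _, hu, hv, rfl⟩)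
    · exact Or.inr (Or.inl ⟨i, j, hij, toJoin_eq_two_mul_iff.1 hu, toJoin_eq_two_mul_iff.1 hv⟩)
    · exact (eq_or_inCplus_of_toJoin_eq (hu.trans hv.symm)).imp_right Or.inr

def ofJoin (n : ℕ) : Word :=
  if n % 2 = 0 then abia (n / 2 + 1) else (true, replicate (n / 2) true)

theorem ofJoin_two_mul (a : ℕ) : ofJoin (2 * a) = abia (a + 1) := by
  simp [ofJoin]

theorem ofJoin_two_mul_add_one (a : ℕ) : ofJoin (2 * a + 1) = (true, replicate a true) := by
  simp [ofJoin, Nat.mul_add_div]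

theorem ofJoin_injective : Function.Injective ofJoin := by
  intro x y h
  rcases Nat.even_or_odd' x with ⟨a, rfl | rfl⟩ <;>
    rcases Nat.even_or_odd' y with ⟨b, rfl | rfl⟩
  all_goals simp [ofJoin_two_mul, ofJoin_two_mul_add_one, abia] at h
  all_goals omega

theorem ofJoin_eq_abia_iff {n i : ℕ} : ofJoin n = abia (i + 1) ↔ n = 2 * i := by
  refine ⟨fun h => ?_, fun h => h ▸ ofJoin_two_mul i⟩
  rcases Nat.even_or_odd' n with ⟨a, rfl | rfl⟩
  · rw [ofJoin_two_mul] at h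
    simpa using abia_injective h
  · simp [ofJoin_two_mul_add_one, abia] at h

theorem not_inCplus_ofJoin (n : ℕ) : ¬ inCplus (ofJoin n) := by
  rcases Nat.even_or_odd' n with ⟨a, rfl | rfl⟩
  · rw [ofJoin_two_mul]
    exact not_inCplus_abia a
  · rintro ⟨-, i, -, hs⟩
    have := (subword_iff_isInfix.1 hs).subset (mem_cons_self (a := false))
    simp [ofJoin_two_mul_add_one, wlist] at this

theorem rjoin_iff_eq_or_baseRel_ofJoin {R : ℕ → ℕ → Prop} (hR : ∀ i, R i i) {x y : ℕ} :
    rjoin R (· = ·) x y ↔ ofJoin x = ofJoin y ∨ baseRel R (ofJoin x) (ofJoin y) := by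
  constructor
  · rintro (⟨a, b, rfl, rfl, hab⟩ | ⟨a, b, rfl, rfl, rfl⟩)
    · exact Or.inr (Or.inl ⟨a, b, hab, ofJoin_two_mul a, ofJoin_two_mul b⟩)
    · exact Or.inl rfl
  · rintro (h | ⟨i, j, hij, hx, hy⟩ | ⟨hx, -⟩)
    · exact ofJoin_injective h ▸ rjoin_refl hR (fun _ => rfl) x
    · exact Or.inl ⟨i, j, ofJoin_eq_abia_iff.1 hx, ofJoin_eq_abia_iff.1 hy, hij⟩
    · exact absurd hx (not_inCplus_ofJoin x)

theorem primrec_wlist : Primrec wlist :=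
  Primrec.list_cons.comp Primrec.fst Primrec.snd

theorem primrec_replicate_true : Primrec fun n : ℕ => replicate n true :=
  (Primrec.list_map Primrec.list_range (Primrec.const true).to₂).of_eq fun n => by simp

theorem primrec_abia : Primrec abia :=
  Primrec.pair (Primrec.const false)
    (Primrec.list_append.comp primrec_replicate_true (Primrec.const [false]))

/-- A coding word inside `u` is no longer than `u`, so the quantifier over `i` is bounded. -/
theorem primrecPred_exists_abia {P : Word → Word → Prop} (hP : PrimrecRel P)
    (hlen : ∀ {y x}, P y x → (wlist y).length ≤ (wlist x).length) :
    PrimrecPred fun u => ∃ i, i ≠ 0 ∧ P (abia i) u := by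
  have hrel : PrimrecRel fun (i : ℕ) (u : Word) => i ≠ 0 ∧ P (abia i) u :=
    (Primrec.eq.comp Primrec.fst (Primrec.const 0)).not.and
      (hP.comp (primrec_abia.comp Primrec.fst) Primrec.snd)
  refine (hrel.exists_mem_list.comp
    (Primrec.list_range.comp (Primrec.list_length.comp primrec_wlist)) Primrec.id).of_eq ?_
  intro u
  simp only [id, mem_range]
  refine ⟨fun ⟨i, _, hi⟩ => ⟨i, hi⟩, fun ⟨i, hi, hP⟩ => ⟨i, ?_, hi, hP⟩⟩
  have := hlen hP
  rw [length_wlist_abia] at this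
  omega

theorem primrecPred_isCoding : PrimrecPred isCoding :=
  primrecPred_exists_abia (P := fun y x => x = y) Primrec.eq.swap fun h => h ▸ le_rfl

theorem primrecRel_subword : PrimrecRel Subword :=
  (Primrec.list_isInfix.comp (primrec_wlist.comp Primrec.fst)
    (primrec_wlist.comp Primrec.snd)).of_eq fun _ => subword_iff_isInfix.symm

theorem primrecPred_inCplus : PrimrecPred inCplus :=
  primrecPred_isCoding.not.and <|
    primrecPred_exists_abia primrecRel_subword fun h => (subword_iff_isInfix.1 h).length_le

theorem primrec_toJoin : Primrec toJoin := by
  classical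
  exact Primrec.ite primrecPred_isCoding
    (Primrec.nat_mul.comp (Primrec.const 2)
      (Primrec.nat_sub.comp (Primrec.list_length.comp Primrec.snd) (Primrec.const 2)))
    (Primrec.ite primrecPred_inCplus (Primrec.const 1)
      (Primrec.nat_add.comp (Primrec.nat_mul.comp (Primrec.const 2) Primrec.encode)
        (Primrec.const 3)))

theorem primrec_ofJoin : Primrec ofJoin :=
  Primrec.ite
    (Primrec.eq.comp (Primrec.nat_mod.comp Primrec.id (Primrec.const 2)) (Primrec.const 0))
    (primrec_abia.comp (Primrec.succ.comp (Primrec.nat_div.comp Primrec.id (Primrec.const 2))))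
    (Primrec.pair (Primrec.const true)
      (primrec_replicate_true.comp (Primrec.nat_div.comp Primrec.id (Primrec.const 2))))

/-- the word problem of S(R) is computably bi-reducible with
R ⊕ Id_ω. -/
theorem wordProblemS_equiv (R : ℕ → ℕ → Prop) (hR : Ceer R) :
    ReducesT (wordProblemS R) (rjoin R (· = ·)) ∧
      ReducesT (rjoin R (· = ·)) (wordProblemS R) := by
  have hEquiv : Equivalence R := hR.1
  refine ⟨⟨toJoin, primrec_toJoin.to_comp, fun u v => ?_⟩,
    ⟨ofJoin, primrec_ofJoin.to_comp, fun x y => ?_⟩⟩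
  · rw [wordProblemS_iff hEquiv, eq_or_baseRel_iff_rjoin_toJoin hEquiv.refl]
  · rw [wordProblemS_iff hEquiv, rjoin_iff_eq_or_baseRel_ofJoin hEquiv.refl]
end

section
/- For any c.e. set X ⊆ ℕ, the unidimensional ceer R_X (defined by x R_X y iff x = y or both x,y ∈ X) is dark—i.e., has infinitely many classes and no infinite c.e. transversal—if and only if X is simple. -/
/-- The unidimensional ceer determined by a set X ⊆ ℕ. -/
def uniCeer (X : Set ℕ) : ℕ → ℕ → Prop :=
  fun x y => x = y ∨ (x ∈ X ∧ y ∈ X)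

/-! The classes of `R_X` are `X` (if nonempty) and the singletons of `Xᶜ`, and a set
is a transversal exactly when it meets `X` in at most one point. So `R_X` has infinitely many
classes iff `X` is coinfinite, and an infinite c.e. set disjoint from `X` would be an infinite c.e.
transversal. Conversely, an infinite c.e. transversal `T` of a simple `X` meets `X` in some `a`,
and the infinite c.e. set `T \ {a}` meets `X` in a second point. -/

theorem REPred.and {α : Type*} [Primcodable α] {p q : α → Prop} (hp : REPred p)
    (hq : REPred q) : REPred fun a => p a ∧ q a :=
  have hpq : Partrec fun a => (Part.assert (p a) fun _ => Part.some ()).bind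
      fun _ => Part.assert (q a) fun _ => Part.some () :=
    hp.bind (hq.comp Computable.fst)
  hpq.dom_re.of_eq fun a => by simp [Part.bind, Part.assert]

theorem REPred.mem_diff_singleton {α : Type*} [Primcodable α] [DecidableEq α] {s : Set α}
    (hs : REPred (· ∈ s)) (a : α) : REPred (· ∈ s \ {a}) :=
  hs.and (ComputablePred.not
    (PrimrecRel.comp Primrec.eq Primrec.id (Primrec.const a)).computablePred).to_re

namespace uniCeer

variable {X T : Set ℕ} {x : ℕ}

theorem class_of_mem (hx : x ∈ X) : {y | uniCeer X x y} = X := by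
  ext y
  simp only [uniCeer, Set.mem_ofPred_eq]
  constructor
  · rintro (rfl | ⟨-, hy⟩) <;> assumption
  · exact fun hy => Or.inr ⟨hx, hy⟩

theorem class_of_notMem (hx : x ∉ X) : {y | uniCeer X x y} = {x} := by
  ext y
  simp only [uniCeer, Set.mem_ofPred_eq, Set.mem_singleton_iff]
  constructor
  · rintro (rfl | ⟨hx', -⟩)
    · rfl
    · exact absurd hx' hx
  · exact fun hy => Or.inl hy.symm

theorem infiniteClasses_iff : InfiniteClasses (uniCeer X) ↔ Xᶜ.Infinite := by
  have singletons_sub : (fun x => ({x} : Set ℕ)) '' Xᶜ ⊆ {s | ∃ x, s = {y | uniCeer X x y}} := by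
    rintro s ⟨x, hx, rfl⟩
    exact ⟨x, (class_of_notMem hx).symm⟩
  have sub_insert : {s | ∃ x, s = {y | uniCeer X x y}} ⊆
      insert X ((fun x => ({x} : Set ℕ)) '' Xᶜ) := by
    rintro s ⟨x, rfl⟩
    by_cases hx : x ∈ X
    · exact Or.inl (class_of_mem hx)
    · exact Or.inr ⟨x, hx, (class_of_notMem hx).symm⟩
  constructor
  · intro h hfin
    exact h (((hfin.image _).insert X).subset sub_insert)
  · intro h
    exact (h.image Set.singleton_injective.injOn).mono singletons_sub

theorem isTransversal_iff : IsTransversal (uniCeer X) T ↔ (T ∩ X).Subsingleton := by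
  constructor
  · rintro h x ⟨hxT, hxX⟩ y ⟨hyT, hyX⟩
    by_contra hxy
    exact h x hxT y hyT hxy (Or.inr ⟨hxX, hyX⟩)
  · rintro h x hxT y hyT hxy (rfl | ⟨hxX, hyX⟩)
    · exact hxy rfl
    · exact hxy (h ⟨hxT, hxX⟩ ⟨hyT, hyX⟩)

end uniCeer

theorem uniCeer_dark_iff_simple_general (X : Set ℕ) :
    (InfiniteClasses (uniCeer X) ∧
        ∀ T : Set ℕ, REPred (· ∈ T) → IsTransversal (uniCeer X) T → T.Finite) ↔
      (Xᶜ.Infinite ∧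
        ∀ Y : Set ℕ, REPred (· ∈ Y) → Y.Infinite → (Y ∩ X).Nonempty) := by
  simp only [uniCeer.isTransversal_iff]
  refine and_congr uniCeer.infiniteClasses_iff ?_
  constructor
  · intro hdark Y hY hYinf
    by_contra hdisj
    rw [Set.not_nonempty_iff_eq_empty] at hdisj
    exact hYinf (hdark Y hY (hdisj ▸ Set.subsingleton_empty))
  · intro hsimple T hT htrans
    by_contra hTinf
    obtain ⟨a, haT, haX⟩ := hsimple T hT hTinf
    obtain ⟨b, ⟨hbT, hba⟩, hbX⟩ :=
      hsimple _ (hT.mem_diff_singleton a) (Set.Infinite.sdiff hTinf (Set.finite_singleton a))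
    exact hba (htrans ⟨hbT, hbX⟩ ⟨haT, haX⟩)

/-- for a c.e. set X, the unidimensional ceer R_X is dark
(infinitely many classes and no infinite c.e. transversal) iff X is simple. -/
theorem uniCeer_dark_iff_simple (X : Set ℕ) (hX : REPred (· ∈ X)) :
    (InfiniteClasses (uniCeer X) ∧
        ∀ T : Set ℕ, REPred (· ∈ T) → IsTransversal (uniCeer X) T → T.Finite) ↔
      (Xᶜ.Infinite ∧
        ∀ Y : Set ℕ, REPred (· ∈ Y) → Y.Infinite → (Y ∩ X).Nonempty) :=
  uniCeer_dark_iff_simple_general X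
end
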